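/- arXiv:2105.11359 — 5 statements merged into one kernel-verified Lean document; each statement's English description precedes it below -/
import Mathlib

section
/- Let (K_i)_{i∈ℕ} be an i.i.d. sequence with P(K_1 = k) = (1/c)·k^{-5/4} on the positive integers. Then almost surely all record-times from some index onward are simple, i.e., there exists i_0 such that for every record-time i ≥ i_0, K_i > K_j for all j < i. -/
/-!
A record-time `i` that is not simple is one where `K i` ties the running maximum of the earlier
values. Splitting according to the common value `k` and the index `j` of the tie, independence
bounds its probability by `i p_k² F_k^(i-1)`, where `p_k = P(K = k)` and `F_k = P(K ≤ k)`;
summing over `i` gives at most `∑ₖ (p_k / P(K > k))²`. For the law `p_k ∝ k^(-5/4)` the tail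
`P(K > k)` contains `k + 1` atoms each of mass at least `3^(-5/4) p_k`, so the hazard ratio is
`O(1/k)`, the series converges, and Borel–Cantelli concludes.
-/

open MeasureTheory ENNReal ProbabilityTheory Filter

namespace ENNReal

theorem tsum_natCast_succ_mul_pow (r : ℝ≥0∞) :
    ∑' n : ℕ, ((n + 1 : ℕ) : ℝ≥0∞) * r ^ n = (1 - r)⁻¹ ^ 2 := by
  calc ∑' n : ℕ, ((n + 1 : ℕ) : ℝ≥0∞) * r ^ n
      = ∑' n : ℕ, ∑ kl ∈ Finset.HasAntidiagonal.antidiagonal n, r ^ kl.1 * r ^ kl.2 := by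
        refine tsum_congr fun n => ?_
        have hterm : ∀ kl ∈ Finset.HasAntidiagonal.antidiagonal n, r ^ kl.1 * r ^ kl.2 = r ^ n :=
          fun kl hkl => by rw [← pow_add, Finset.HasAntidiagonal.mem_antidiagonal.mp hkl]
        rw [Finset.sum_congr rfl hterm, Finset.sum_const, Finset.Nat.card_antidiagonal,
          nsmul_eq_mul]
    _ = ∑' x : Σ n : ℕ, Finset.HasAntidiagonal.antidiagonal n, r ^ x.2.1.1 * r ^ x.2.1.2 := by
        rw [ENNReal.tsum_sigma']
        exact tsum_congr fun n => (Finset.sum_coe_sort _ _).symm.trans (tsum_fintype _).symm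
    _ = ∑' kl : ℕ × ℕ, r ^ kl.1 * r ^ kl.2 :=
        Finset.HasAntidiagonal.sigmaAntidiagonalEquivProd.tsum_eq (fun kl => r ^ kl.1 * r ^ kl.2)
    _ = (1 - r)⁻¹ ^ 2 := by
        simp_rw [ENNReal.tsum_prod', ENNReal.tsum_mul_left, ENNReal.tsum_mul_right,
          ENNReal.tsum_geometric, sq]

theorem tsum_natCast_mul_pow_sub_one (r : ℝ≥0∞) :
    ∑' n : ℕ, (n : ℝ≥0∞) * r ^ (n - 1) = (1 - r)⁻¹ ^ 2 := by
  rw [tsum_eq_zero_add' ENNReal.summable, ← tsum_natCast_succ_mul_pow]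
  simp

theorem tsum_inv_natCast_add_one_sq_ne_top : ∑' k : ℕ, ((k : ℝ≥0∞) + 1)⁻¹ ^ 2 ≠ ⊤ := by
  have hsum : Summable fun k : ℕ => ((k : ℝ) + 1)⁻¹ ^ 2 := by
    simp_rw [inv_pow]
    exact_mod_cast (summable_nat_add_iff 1).mpr
      (Real.summable_nat_pow_inv.mpr (by norm_num : 1 < 2))
  have hterm : ∀ k : ℕ, ((k : ℝ≥0∞) + 1)⁻¹ ^ 2 = ENNReal.ofReal (((k : ℝ) + 1)⁻¹ ^ 2) := by
    intro k
    rw [ENNReal.ofReal_pow (by positivity), ENNReal.ofReal_inv_of_pos (by positivity)]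
    norm_cast
  rw [tsum_congr hterm, ← ENNReal.ofReal_tsum_of_nonneg (fun k => by positivity) hsum]
  exact ENNReal.ofReal_ne_top

theorem tsum_div_natCast_add_one_sq_ne_top {D : ℝ≥0∞} (hD : D ≠ ⊤) :
    ∑' k : ℕ, (D / ((k : ℝ≥0∞) + 1)) ^ 2 ≠ ⊤ := by
  simp_rw [div_eq_mul_inv, mul_pow, ENNReal.tsum_mul_left]
  exact ENNReal.mul_ne_top (pow_ne_top hD) tsum_inv_natCast_add_one_sq_ne_top

end ENNReal

theorem Finset.prod_range_succ_ite_eq_or_eq {M : Type*} [CommMonoid M] {i j : ℕ} (hj : j < i)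
    (a b : M) :
    ∏ m ∈ Finset.range (i + 1), (if m = i ∨ m = j then a else b) = a ^ 2 * b ^ (i - 1) := by
  have hj' : j ∈ Finset.range i := Finset.mem_range.mpr hj
  rw [Finset.prod_range_succ, ← Finset.mul_prod_erase _ _ hj', if_pos (Or.inr rfl),
    if_pos (Or.inl rfl), Finset.prod_congr rfl (g := fun _ => b), Finset.prod_const,
    Finset.card_erase_of_mem hj', Finset.card_range]
  · rw [mul_right_comm, ← sq]
  intro m hm
  obtain ⟨hmj, hmi⟩ := Finset.mem_erase.mp hm
  exact if_neg (by have := Finset.mem_range.mp hmi; omega)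

section Records

variable {Ω : Type*} [MeasurableSpace Ω] {μ : Measure Ω} {K : ℕ → Ω → ℕ}

def nonSimpleRecord (K : ℕ → Ω → ℕ) (i : ℕ) : Set Ω :=
  {ω | (∀ j < i, K j ω ≤ K i ω) ∧ ∃ j < i, K j ω = K i ω}

theorem measure_nonSimpleRecord_le (hindep : iIndepFun K μ)
    (hident : ∀ i, IdentDistrib (K i) (K 0) μ μ) (i : ℕ) :
    μ (nonSimpleRecord K i) ≤
      ∑' k, (i : ℝ≥0∞) * (μ (K 0 ⁻¹' {k}) ^ 2 * μ (K 0 ⁻¹' Set.Iic k) ^ (i - 1)) := by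
  -- a tie between `j` and `i` at level `k` pins `K i` and `K j` to `k` and bounds the others by `k`
  let S : ℕ → ℕ → ℕ → Set ℕ := fun j k m => if m = i ∨ m = j then {k} else Set.Iic k
  have hcover : nonSimpleRecord K i ⊆
      ⋃ k, ⋃ j ∈ Finset.range i, ⋂ m ∈ Finset.range (i + 1), K m ⁻¹' S j k m := by
    rintro ω ⟨hrec, j, hj, htie⟩
    simp only [Set.mem_iUnion, Set.mem_iInter, Finset.mem_range, Set.mem_preimage]
    refine ⟨K i ω, j, hj, fun m hm => ?_⟩
    by_cases hmij : m = i ∨ m = j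
    · rcases hmij with rfl | rfl <;> simp [S, htie]
    · simp only [S, if_neg hmij, Set.mem_Iic]
      exact hrec m (by omega)
  have hinter : ∀ j < i, ∀ k, μ (⋂ m ∈ Finset.range (i + 1), K m ⁻¹' S j k m) =
      μ (K 0 ⁻¹' {k}) ^ 2 * μ (K 0 ⁻¹' Set.Iic k) ^ (i - 1) := by
    intro j hj k
    rw [hindep.meas_biInter fun m _ => ⟨_, MeasurableSet.of_discrete, rfl⟩,
      ← Finset.prod_range_succ_ite_eq_or_eq hj]
    refine Finset.prod_congr rfl fun m _ => ?_
    rw [(hident m).measure_mem_eq MeasurableSet.of_discrete]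
    simp only [S]
    split_ifs <;> rfl
  calc μ (nonSimpleRecord K i)
      ≤ ∑' k, ∑ j ∈ Finset.range i, μ (⋂ m ∈ Finset.range (i + 1), K m ⁻¹' S j k m) :=
        (measure_mono hcover).trans <| (measure_iUnion_le _).trans <|
          ENNReal.tsum_le_tsum fun k => measure_biUnion_finset_le _ _
    _ = _ := by
        refine tsum_congr fun k => ?_
        rw [Finset.sum_congr rfl fun j hj => hinter j (Finset.mem_range.mp hj) k,
          Finset.sum_const, Finset.card_range, nsmul_eq_mul]

theorem tsum_measure_nonSimpleRecord_le [IsProbabilityMeasure μ] (hindep : iIndepFun K μ)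
    (hident : ∀ i, IdentDistrib (K i) (K 0) μ μ) :
    ∑' i, μ (nonSimpleRecord K i) ≤ ∑' k, (μ (K 0 ⁻¹' {k}) / μ (K 0 ⁻¹' Set.Ioi k)) ^ 2 := by
  have htail : ∀ k, μ (K 0 ⁻¹' Set.Ioi k) = 1 - μ (K 0 ⁻¹' Set.Iic k) := fun k => by
    rw [← prob_compl_eq_one_sub₀ ((hident 0).aemeasurable_fst.nullMeasurable measurableSet_Iic),
      ← Set.preimage_compl, Set.compl_Iic]
  calc ∑' i, μ (nonSimpleRecord K i)
      ≤ ∑' (i : ℕ) (k : ℕ),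
          (i : ℝ≥0∞) * (μ (K 0 ⁻¹' {k}) ^ 2 * μ (K 0 ⁻¹' Set.Iic k) ^ (i - 1)) :=
        ENNReal.tsum_le_tsum (measure_nonSimpleRecord_le hindep hident)
    _ = ∑' k, μ (K 0 ⁻¹' {k}) ^ 2 *
          ∑' i : ℕ, (i : ℝ≥0∞) * μ (K 0 ⁻¹' Set.Iic k) ^ (i - 1) := by
        rw [ENNReal.tsum_comm]
        refine tsum_congr fun k => ?_
        rw [← ENNReal.tsum_mul_left]
        exact tsum_congr fun i => mul_left_comm _ _ _
    _ = ∑' k, (μ (K 0 ⁻¹' {k}) / μ (K 0 ⁻¹' Set.Ioi k)) ^ 2 := by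
        simp_rw [ENNReal.tsum_natCast_mul_pow_sub_one, htail, div_eq_mul_inv, mul_pow]

theorem ae_eventually_simple_record_of_hazard [IsProbabilityMeasure μ] (hindep : iIndepFun K μ)
    (hident : ∀ i, IdentDistrib (K i) (K 0) μ μ)
    (hhazard : ∑' k, (μ (K 0 ⁻¹' {k}) / μ (K 0 ⁻¹' Set.Ioi k)) ^ 2 ≠ ⊤) :
    ∀ᵐ ω ∂μ, ∃ i₀, ∀ i ≥ i₀, (∀ j < i, K j ω ≤ K i ω) → ∀ j < i, K j ω < K i ω := by
  have hfin := ne_top_of_le_ne_top hhazard (tsum_measure_nonSimpleRecord_le hindep hident)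
  filter_upwards [ae_eventually_notMem hfin] with ω hω
  obtain ⟨i₀, hi₀⟩ := eventually_atTop.mp hω
  refine ⟨i₀, fun i hi hrec j hj => lt_of_le_of_ne (hrec j hj) fun htie => ?_⟩
  exact hi₀ i hi ⟨hrec, j, hj, htie⟩

end Records

noncomputable def powerLaw (a : ℝ≥0∞) (s : ℝ) (k : ℕ) : ℝ≥0∞ :=
  if k = 0 then 0 else a * (k : ℝ≥0∞) ^ (-s)

theorem powerLaw_antitoneOn (a : ℝ≥0∞) {s : ℝ} (hs : 0 ≤ s) :
    AntitoneOn (powerLaw a s) (Set.Ici 1) := by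
  intro m hm n hn hmn
  rw [powerLaw, powerLaw, if_neg (by simp at hn; omega), if_neg (by simp at hm; omega),
    ENNReal.rpow_neg, ENNReal.rpow_neg]
  gcongr

theorem powerLaw_le_three_rpow_mul (a : ℝ≥0∞) {s : ℝ} (hs : 0 ≤ s) (k : ℕ) :
    powerLaw a s k ≤ 3 ^ s * powerLaw a s (2 * k + 1) := by
  rcases Nat.eq_zero_or_pos k with rfl | hk
  · simp [powerLaw]
  rw [powerLaw, powerLaw, if_neg hk.ne', if_neg (by omega), mul_left_comm]
  gcongr
  calc (k : ℝ≥0∞) ^ (-s)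
      = 3 ^ s * (3 * (k : ℝ≥0∞)) ^ (-s) := by
        rw [ENNReal.mul_rpow_of_ne_top (by simp) (by simp), ← mul_assoc, ENNReal.rpow_neg 3,
          ENNReal.mul_inv_cancel (by positivity) (by simp), one_mul]
    _ ≤ 3 ^ s * ((2 * k + 1 : ℕ) : ℝ≥0∞) ^ (-s) := by
        rw [ENNReal.rpow_neg, ENNReal.rpow_neg]
        gcongr
        exact_mod_cast (by omega : 2 * k + 1 ≤ 3 * k)

section Hazard

variable {Ω : Type*} [MeasurableSpace Ω] {μ : Measure Ω} {f : Ω → ℕ}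

theorem natCast_add_one_mul_measure_le_measure_preimage_Ioi (hf : Measurable f)
    (hanti : AntitoneOn (fun k => μ (f ⁻¹' {k})) (Set.Ici 1)) (k : ℕ) :
    ((k : ℝ≥0∞) + 1) * μ (f ⁻¹' {2 * k + 1}) ≤ μ (f ⁻¹' Set.Ioi k) :=
  calc ((k : ℝ≥0∞) + 1) * μ (f ⁻¹' {2 * k + 1})
      = ∑ _m ∈ Finset.Ioc k (2 * k + 1), μ (f ⁻¹' {2 * k + 1}) := by
        rw [Finset.sum_const, Nat.card_Ioc, nsmul_eq_mul, show 2 * k + 1 - k = k + 1 by omega]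
        push_cast
        rfl
    _ ≤ ∑ m ∈ Finset.Ioc k (2 * k + 1), μ (f ⁻¹' {m}) := Finset.sum_le_sum fun m hm => by
        obtain ⟨hkm, hm⟩ := Finset.mem_Ioc.mp hm
        exact hanti (Set.mem_Ici.mpr (by omega)) (Set.mem_Ici.mpr (by omega)) hm
    _ = μ (f ⁻¹' Set.Ioc k (2 * k + 1)) := by
        rw [sum_measure_preimage_singleton _ fun m _ => hf (measurableSet_singleton m),
          Finset.coe_Ioc]
    _ ≤ μ (f ⁻¹' Set.Ioi k) := measure_mono (Set.preimage_mono Set.Ioc_subset_Ioi_self)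

theorem measure_preimage_div_measure_preimage_Ioi_le (hf : Measurable f)
    (hanti : AntitoneOn (fun k => μ (f ⁻¹' {k})) (Set.Ici 1)) {D : ℝ≥0∞}
    (hdouble : ∀ k, μ (f ⁻¹' {k}) ≤ D * μ (f ⁻¹' {2 * k + 1})) (k : ℕ) :
    μ (f ⁻¹' {k}) / μ (f ⁻¹' Set.Ioi k) ≤ D / ((k : ℝ≥0∞) + 1) := by
  refine ENNReal.div_le_of_le_mul ?_
  calc μ (f ⁻¹' {k})
      ≤ D * μ (f ⁻¹' {2 * k + 1}) := hdouble k
    _ = D / ((k : ℝ≥0∞) + 1) * (((k : ℝ≥0∞) + 1) * μ (f ⁻¹' {2 * k + 1})) := by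
        rw [← mul_assoc, ENNReal.div_mul_cancel (by positivity) (by simp)]
    _ ≤ D / ((k : ℝ≥0∞) + 1) * μ (f ⁻¹' Set.Ioi k) := by
        gcongr
        exact natCast_add_one_mul_measure_le_measure_preimage_Ioi hf hanti k

theorem tsum_hazard_sq_ne_top_of_powerLaw (hf : Measurable f) {a : ℝ≥0∞} {s : ℝ} (hs : 0 ≤ s)
    (hlaw : ∀ k, μ (f ⁻¹' {k}) = powerLaw a s k) :
    ∑' k, (μ (f ⁻¹' {k}) / μ (f ⁻¹' Set.Ioi k)) ^ 2 ≠ ⊤ := by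
  have hanti : AntitoneOn (fun k => μ (f ⁻¹' {k})) (Set.Ici 1) := by
    simpa only [hlaw] using powerLaw_antitoneOn a hs
  have hdouble : ∀ k, μ (f ⁻¹' {k}) ≤ 3 ^ s * μ (f ⁻¹' {2 * k + 1}) := by
    simpa only [hlaw] using powerLaw_le_three_rpow_mul a hs
  have hD : (3 : ℝ≥0∞) ^ s ≠ ⊤ := ENNReal.rpow_ne_top_of_nonneg hs (by simp)
  refine ne_top_of_le_ne_top (ENNReal.tsum_div_natCast_add_one_sq_ne_top hD) ?_
  exact ENNReal.tsum_le_tsum fun k =>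
    pow_le_pow_left' (measure_preimage_div_measure_preimage_Ioi_le hf hanti hdouble k) 2

end Hazard

theorem stmt_2_general {Ω : Type*} [MeasurableSpace Ω] (μ : Measure Ω) [IsProbabilityMeasure μ]
    (c : ℝ≥0∞)
    (K : ℕ → Ω → ℕ) (hmeas : ∀ i, Measurable (K i))
    (hindep : iIndepFun K μ)
    (hpos : ∀ i, ∀ᵐ ω ∂μ, 1 ≤ K i ω)
    (hlaw : ∀ i k, μ {ω | K i ω = k + 1} = c⁻¹ * ((k + 1 : ℕ) : ℝ≥0∞) ^ (-(5/4 : ℝ))) :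
    ∀ᵐ ω ∂μ, ∃ i₀, ∀ i ≥ i₀, (∀ j < i, K j ω ≤ K i ω) → (∀ j < i, K j ω < K i ω) := by
  have hK : ∀ i k, μ (K i ⁻¹' {k}) = powerLaw c⁻¹ (5 / 4) k := by
    rintro i (_ | k)
    · exact measure_mono_null (fun ω hω => by simp_all) (ae_iff.mp (hpos i))
    · rw [powerLaw, if_neg k.succ_ne_zero]
      exact hlaw i k
  have hident : ∀ i, IdentDistrib (K i) (K 0) μ μ := fun i =>
    ⟨(hmeas i).aemeasurable, (hmeas 0).aemeasurable, Measure.ext_of_singleton fun k => by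
      rw [Measure.map_apply (hmeas i) (measurableSet_singleton k),
        Measure.map_apply (hmeas 0) (measurableSet_singleton k), hK, hK]⟩
  exact ae_eventually_simple_record_of_hazard hindep hident
    (tsum_hazard_sq_ne_top_of_powerLaw (hmeas 0) (by norm_num) (hK 0))

/-- For an i.i.d. sequence `(K i)` with `P(K i = k) = (1/c) k^(-5/4)` on the positive
integers, almost surely all record-times are eventually simple: there is `i₀` such
that any record-time `i ≥ i₀` (i.e. `K j ω ≤ K i ω` for all `j < i`) is simple
(i.e. `K j ω < K i ω` for all `j < i`). -/
theorem stmt_2 {Ω : Type*} [MeasurableSpace Ω] (μ : Measure Ω) [IsProbabilityMeasure μ]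
    (c : ℝ≥0∞) (hc : c = ∑' j : ℕ, ((j + 1 : ℕ) : ℝ≥0∞) ^ (-(5/4 : ℝ)))
    (K : ℕ → Ω → ℕ) (hmeas : ∀ i, Measurable (K i))
    (hindep : iIndepFun K μ)
    (hpos : ∀ i, ∀ᵐ ω ∂μ, 1 ≤ K i ω)
    (hlaw : ∀ i k, μ {ω | K i ω = k + 1} = c⁻¹ * ((k + 1 : ℕ) : ℝ≥0∞) ^ (-(5/4 : ℝ))) :
    ∀ᵐ ω ∂μ, ∃ i₀, ∀ i ≥ i₀, (∀ j < i, K j ω ≤ K i ω) → (∀ j < i, K j ω < K i ω) :=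
  stmt_2_general μ c K hmeas hindep hpos hlaw
end

section
/- Let (K_i, Y_i)_{i∈ℕ} be the i.i.d. process above. Then almost every realization stabilizes: there exists i_0 such that (1) for all i ≥ i_0, max{K_1,…,K_i} > i, and (2) every record-time i ≥ i_0 is simple and has Y_i = 'blue'. -/
open MeasureTheory ENNReal ProbabilityTheory
open Finset Filter

/-!
Write `G k = P(K > k)`. Comparing `P(K = k)` with the `k` terms `P(K = j)`, `k < j ≤ 2k`, gives
`k P(K = k) ≤ 2^(5/4) G k`, hence also `G k ≳ k^(-1/4)`. Each of the three properties then fails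
only finitely often by Borel–Cantelli:
* `P(max_{j<i} K j ≤ i) = (1 - G i)^i ≤ exp(-i G i) ≤ exp(-const · i^(3/4))`;
* summing over the record value `k`, the expected number of red records is
  `∑ₖ P(K = k, red) ∑ᵢ P(K ≤ k)^i = ∑ₖ 2^(-k) P(K = k) / G k`;
* the expected number of tied records is at most
  `∑ₖ P(K = k)² ∑ᵢ i P(K ≤ k)^(i-1) = ∑ₖ (P(K = k) / G k)² ≲ ∑ₖ k^(-2)`.
-/

theorem ENNReal.tsum_add_one_mul_pow (r : ℝ≥0∞) :
    ∑' n : ℕ, (n + 1) * r ^ n = (1 - r)⁻¹ ^ 2 := by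
  calc ∑' n : ℕ, (n + 1) * r ^ n
      = ∑' n : ℕ, ∑' kl : antidiagonal n, r ^ (kl : ℕ × ℕ).1 * r ^ (kl : ℕ × ℕ).2 := by
        congr 1 with n
        rw [Finset.tsum_subtype (antidiagonal n) (fun kl => r ^ kl.1 * r ^ kl.2),
          sum_congr rfl fun kl hkl => by rw [← pow_add, mem_antidiagonal.1 hkl]]
        simp [Nat.card_antidiagonal]
    _ = ∑' x : Σ n : ℕ, antidiagonal n, r ^ (x.2 : ℕ × ℕ).1 * r ^ (x.2 : ℕ × ℕ).2 :=
        (ENNReal.tsum_sigma' fun x : Σ n : ℕ, antidiagonal n =>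
          r ^ (x.2 : ℕ × ℕ).1 * r ^ (x.2 : ℕ × ℕ).2).symm
    _ = ∑' kl : ℕ × ℕ, r ^ kl.1 * r ^ kl.2 :=
        HasAntidiagonal.sigmaAntidiagonalEquivProd.tsum_eq (fun kl : ℕ × ℕ => r ^ kl.1 * r ^ kl.2)
    _ = (1 - r)⁻¹ ^ 2 := by
        rw [ENNReal.tsum_prod (f := fun k l => r ^ k * r ^ l)]
        simp_rw [ENNReal.tsum_mul_left, ENNReal.tsum_mul_right, ENNReal.tsum_geometric, sq]

theorem Real.exp_neg_le_two_div_sq {y : ℝ} (hy : 0 < y) : Real.exp (-y) ≤ 2 / y ^ 2 := by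
  have h := Real.pow_div_factorial_le_exp y hy.le 2
  rw [Real.exp_neg, inv_le_comm₀ (Real.exp_pos y) (by positivity), inv_div]
  simpa using h

theorem summable_pow_of_le_one_sub_mul_rpow {x : ℕ → ℝ} {b t : ℝ} (hb : 0 < b) (ht : t < 1 / 2)
    (hx₀ : ∀ n, 0 ≤ x n) (hx : ∀ n, 1 ≤ n → x n ≤ 1 - b * (n : ℝ) ^ (-t)) :
    Summable fun n => x n ^ n := by
  refine Summable.of_norm_bounded_eventually_nat
    ((Real.summable_nat_rpow.2 (by linarith : 2 * t - 2 < -1)).mul_left (2 / b ^ 2)) ?_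
  filter_upwards [eventually_ge_atTop 1] with n hn
  have hn₀ : (0 : ℝ) < n := by exact_mod_cast hn
  have hexp : x n ^ n ≤ Real.exp (-(b * (n : ℝ) ^ (1 - t))) :=
    calc x n ^ n ≤ Real.exp (-(b * (n : ℝ) ^ (-t))) ^ n :=
          pow_le_pow_left₀ (hx₀ n) ((hx n hn).trans (Real.one_sub_le_exp_neg _)) n
      _ = Real.exp (-(b * (n : ℝ) ^ (1 - t))) := by
          rw [← Real.exp_nat_mul, sub_eq_add_neg, Real.rpow_add hn₀, Real.rpow_one]; ring_nf
  calc ‖x n ^ n‖ = x n ^ n := Real.norm_of_nonneg (pow_nonneg (hx₀ n) n)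
    _ ≤ 2 / (b * (n : ℝ) ^ (1 - t)) ^ 2 := hexp.trans (Real.exp_neg_le_two_div_sq (by positivity))
    _ = 2 / b ^ 2 * (n : ℝ) ^ (2 * t - 2) := by
        rw [mul_pow, ← Real.rpow_natCast ((n : ℝ) ^ (1 - t)), ← Real.rpow_mul hn₀.le,
          show (2 * t - 2) = -((1 - t) * (2 : ℕ)) by push_cast; ring, Real.rpow_neg hn₀.le]
        field_simp

theorem ProbabilityTheory.iIndepFun.measure_le_pow_mul_pow {Ω ι β : Type*} [MeasurableSpace Ω]
    [MeasurableSpace β] [DecidableEq ι] {μ : Measure Ω} {X : ι → Ω → β} (hX : iIndepFun X μ)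
    {T U : Finset ι} (hTU : Disjoint T U) {A B : Set β} (hA : MeasurableSet A)
    (hB : MeasurableSet B) {a b : ℝ≥0∞} (ha : ∀ j ∈ T, μ (X j ⁻¹' A) ≤ a)
    (hb : ∀ j ∈ U, μ (X j ⁻¹' B) ≤ b) {s : Set Ω}
    (hs : ∀ ω ∈ s, (∀ j ∈ T, X j ω ∈ A) ∧ ∀ j ∈ U, X j ω ∈ B) :
    μ s ≤ a ^ #T * b ^ #U := by
  set C : ι → Set β := fun j => if j ∈ T then A else B
  have hsC : s ⊆ ⋂ j ∈ T ∪ U, X j ⁻¹' C j := by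
    intro ω hω
    simp only [Set.mem_iInter, mem_union]
    rintro j (hj | hj)
    · simpa [C, hj] using (hs ω hω).1 j hj
    · simpa [C, disjoint_right.1 hTU hj] using (hs ω hω).2 j hj
  calc μ s ≤ ∏ j ∈ T ∪ U, μ (X j ⁻¹' C j) :=
        (measure_mono hsC).trans_eq <| hX.measure_inter_preimage_eq_mul _ fun j _ => by
          by_cases hj : j ∈ T <;> simp [C, hj, hA, hB]
    _ = (∏ j ∈ T, μ (X j ⁻¹' A)) * ∏ j ∈ U, μ (X j ⁻¹' B) := by
        rw [prod_union hTU]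
        congr 1 <;> refine prod_congr rfl fun j hj => ?_
        · simp [C, hj]
        · simp [C, disjoint_right.1 hTU hj]
    _ ≤ a ^ #T * b ^ #U := mul_le_mul' (prod_le_pow_card _ _ _ ha) (prod_le_pow_card _ _ _ hb)

theorem identDistrib_of_measure_eq {Ω β : Type*} [MeasurableSpace Ω] [MeasurableSpace β]
    [Countable β] [MeasurableSingletonClass β] {μ : Measure Ω} {X Y : Ω → β} (hX : Measurable X)
    (hY : Measurable Y) (h : ∀ k, μ {ω | X ω = k} = μ {ω | Y ω = k}) : IdentDistrib X Y μ μ where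
  aemeasurable_fst := hX.aemeasurable
  aemeasurable_snd := hY.aemeasurable
  map_eq := Measure.ext_of_singleton fun k => by
    rw [Measure.map_apply hX (measurableSet_singleton k),
      Measure.map_apply hY (measurableSet_singleton k)]
    exact h k

section NatValued

variable {Ω : Type*} [MeasurableSpace Ω] {μ : Measure Ω} {X : Ω → ℕ} {a s : ℝ}

theorem prob_le_eq_one_sub_prob_lt [IsProbabilityMeasure μ] (hX : Measurable X) (n : ℕ) :
    μ {ω | X ω ≤ n} = 1 - μ {ω | n < X ω} := by
  rw [← prob_compl_eq_one_sub (measurableSet_lt measurable_const hX)]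
  congr 1 with ω
  simp

theorem one_sub_prob_le_eq_prob_lt [IsProbabilityMeasure μ] (hX : Measurable X) (n : ℕ) :
    1 - μ {ω | X ω ≤ n} = μ {ω | n < X ω} := by
  rw [prob_le_eq_one_sub_prob_lt hX, ENNReal.sub_sub_cancel one_ne_top prob_le_one]

theorem exists_pos_measure_eq_ofReal_rpow [IsProbabilityMeasure μ] (hX : Measurable X)
    (h0 : μ {ω | X ω = 0} = 0) {c : ℝ≥0∞}
    (hlaw : ∀ k, μ {ω | X ω = k + 1} = c⁻¹ * ((k + 1 : ℕ) : ℝ≥0∞) ^ (-s)) :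
    ∃ a > 0, ∀ k, 0 < k → μ {ω | X ω = k} = ENNReal.ofReal (a * (k : ℝ) ^ (-s)) := by
  have hc_top : c⁻¹ ≠ ⊤ := ne_top_of_le_ne_top one_ne_top <| by
    simpa [hlaw 0] using prob_le_one (μ := μ) (s := {ω | X ω = 1})
  have hc_zero : c⁻¹ ≠ 0 := by
    intro hc
    have hfibres : ∑' k, μ (X ⁻¹' {k}) = 1 := by
      rw [← tsum_univ, tsum_measure_preimage_singleton Set.countable_univ
        fun k _ => hX (measurableSet_singleton k), Set.preimage_univ, measure_univ]
    rw [tsum_eq_zero_add' ENNReal.summable] at hfibres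
    simp only [Set.preimage, Set.mem_singleton_iff, h0, hlaw, hc, zero_mul, tsum_zero,
      add_zero] at hfibres
    exact zero_ne_one hfibres
  refine ⟨c⁻¹.toReal, ENNReal.toReal_pos hc_zero hc_top, fun k hk => ?_⟩
  obtain ⟨k, rfl⟩ := Nat.exists_eq_add_one_of_ne_zero hk.ne'
  rw [hlaw k, ENNReal.ofReal_mul toReal_nonneg, ENNReal.ofReal_toReal hc_top,
    ← ENNReal.ofReal_rpow_of_pos (by positivity), ENNReal.ofReal_natCast]

theorem ofReal_nat_mul_rpow_two_mul_le_measure_lt (hX : Measurable X) (ha : 0 ≤ a) (hs : 0 ≤ s)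
    (hlaw : ∀ k, 0 < k → μ {ω | X ω = k} = ENNReal.ofReal (a * (k : ℝ) ^ (-s))) (k : ℕ) :
    ENNReal.ofReal (k * (a * (2 * k : ℝ) ^ (-s))) ≤ μ {ω | k < X ω} := by
  rcases Nat.eq_zero_or_pos k with rfl | hk
  · simp
  calc ENNReal.ofReal (k * (a * (2 * k : ℝ) ^ (-s)))
      = ∑ _j ∈ Ioc k (2 * k), ENNReal.ofReal (a * (2 * k : ℝ) ^ (-s)) := by
        rw [sum_const, Nat.card_Ioc, nsmul_eq_mul, ENNReal.ofReal_mul (Nat.cast_nonneg _),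
          ENNReal.ofReal_natCast]
        congr 2
        omega
    _ ≤ ∑ j ∈ Ioc k (2 * k), μ (X ⁻¹' {j}) := by
        refine sum_le_sum fun j hj => ?_
        obtain ⟨hkj, hj2k⟩ := mem_Ioc.1 hj
        show _ ≤ μ {ω | X ω = j}
        rw [hlaw j (hk.trans hkj)]
        refine ENNReal.ofReal_le_ofReal (mul_le_mul_of_nonneg_left
          (Real.rpow_le_rpow_of_nonpos (by exact_mod_cast hk.trans hkj) ?_ (by linarith)) ha)
        exact_mod_cast hj2k
    _ = μ (X ⁻¹' ↑(Ioc k (2 * k))) :=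
        sum_measure_preimage_singleton _ fun j _ => hX (measurableSet_singleton j)
    _ ≤ μ {ω | k < X ω} :=
        measure_mono fun ω hω => show k < X ω from (mem_Ioc.1 (mem_coe.1 hω)).1

theorem measure_eq_mul_inv_measure_lt_le (hX : Measurable X) (ha : 0 ≤ a) (hs : 0 ≤ s)
    (h0 : μ {ω | X ω = 0} = 0)
    (hlaw : ∀ k, 0 < k → μ {ω | X ω = k} = ENNReal.ofReal (a * (k : ℝ) ^ (-s))) (k : ℕ) :
    μ {ω | X ω = k} * (μ {ω | k < X ω})⁻¹ ≤ ENNReal.ofReal (2 ^ s / k) := by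
  rcases Nat.eq_zero_or_pos k with rfl | hk
  · simp [h0]
  have hk₀ : (0 : ℝ) < k := by exact_mod_cast hk
  refine ENNReal.div_le_of_le_mul ?_
  calc μ {ω | X ω = k} = ENNReal.ofReal (2 ^ s / k * (k * (a * (2 * k : ℝ) ^ (-s)))) := by
        rw [hlaw k hk, Real.mul_rpow zero_le_two hk₀.le, Real.rpow_neg zero_le_two]
        congr 1
        field_simp
    _ ≤ ENNReal.ofReal (2 ^ s / k) * μ {ω | k < X ω} := by
        rw [ENNReal.ofReal_mul (by positivity)]
        gcongr
        exact ofReal_nat_mul_rpow_two_mul_le_measure_lt hX ha hs hlaw k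

theorem ofReal_mul_rpow_le_measure_lt (hX : Measurable X) (ha : 0 ≤ a) (hs : 0 ≤ s)
    (hlaw : ∀ k, 0 < k → μ {ω | X ω = k} = ENNReal.ofReal (a * (k : ℝ) ^ (-s))) {k : ℕ}
    (hk : 1 ≤ k) :
    ENNReal.ofReal (a * 2 ^ (-s) * (k : ℝ) ^ (-(s - 1))) ≤ μ {ω | k < X ω} := by
  have hk₀ : (0 : ℝ) < k := by exact_mod_cast hk
  convert ofReal_nat_mul_rpow_two_mul_le_measure_lt hX ha hs hlaw k using 2
  rw [Real.mul_rpow zero_le_two hk₀.le, neg_sub, Real.rpow_sub hk₀, Real.rpow_one,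
    Real.rpow_neg hk₀.le]
  field_simp

end NatValued

def IsRecord (u : ℕ → ℕ) (i : ℕ) : Prop := ∀ j < i, u j ≤ u i

section Records

variable {Ω : Type*} [MeasurableSpace Ω] {μ : Measure Ω} {K : ℕ → Ω → ℕ} {Y : ℕ → Ω → Bool}

theorem measure_forall_lt_le_le_pow (hX : iIndepFun (fun i ω => (K i ω, Y i ω)) μ)
    (hident : ∀ i, IdentDistrib (K i) (K 0) μ μ) (i n : ℕ) :
    μ {ω | ∀ j < i, K j ω ≤ n} ≤ μ {ω | K 0 ω ≤ n} ^ i := by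
  have := hX.measure_le_pow_mul_pow (disjoint_empty_right (range i)) (A := {p | p.1 ≤ n})
    .of_discrete .univ (a := μ {ω | K 0 ω ≤ n}) (b := 1)
    (fun j _ => ((hident j).measure_mem_eq (measurableSet_Iic (a := n))).le) (by simp)
    (s := {ω | ∀ j < i, K j ω ≤ n}) fun ω hω => ⟨fun j hj => hω j (mem_range.1 hj), by simp⟩
  simpa using this

theorem tsum_measure_record_red_le [IsProbabilityMeasure μ] (hK : Measurable (K 0))
    (hX : iIndepFun (fun i ω => (K i ω, Y i ω)) μ) (hident : ∀ i, IdentDistrib (K i) (K 0) μ μ)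
    {r : ℕ → ℝ≥0∞} (hr : ∀ i k, μ {ω | K i ω = k ∧ Y i ω = true} ≤ r k) :
    ∑' i, μ {ω | IsRecord (K · ω) i ∧ Y i ω = true}
      ≤ ∑' k, r k * (μ {ω | k < K 0 ω})⁻¹ := by
  have hi : ∀ i, μ {ω | IsRecord (K · ω) i ∧ Y i ω = true}
      ≤ ∑' k, r k * μ {ω | K 0 ω ≤ k} ^ i := fun i =>
    calc μ {ω | IsRecord (K · ω) i ∧ Y i ω = true}
        ≤ μ (⋃ k, {ω | (K i ω = k ∧ Y i ω = true) ∧ ∀ j < i, K j ω ≤ k}) :=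
          measure_mono fun ω hω => Set.mem_iUnion.2 ⟨K i ω, ⟨rfl, hω.2⟩, hω.1⟩
      _ ≤ ∑' k, μ {ω | (K i ω = k ∧ Y i ω = true) ∧ ∀ j < i, K j ω ≤ k} := measure_iUnion_le _
      _ ≤ ∑' k, r k * μ {ω | K 0 ω ≤ k} ^ i := ENNReal.tsum_le_tsum fun k => by
          have := hX.measure_le_pow_mul_pow (disjoint_singleton_left.2 notMem_range_self)
            (A := {p | p.1 = k ∧ p.2 = true}) (B := {p | p.1 ≤ k}) .of_discrete .of_discrete
            (a := r k) (b := μ {ω | K 0 ω ≤ k}) (by simpa using hr i k)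
            (fun j _ => ((hident j).measure_mem_eq (measurableSet_Iic (a := k))).le)
            (s := {ω | (K i ω = k ∧ Y i ω = true) ∧ ∀ j < i, K j ω ≤ k})
            fun ω hω => ⟨by simpa using hω.1, fun j hj => hω.2 j (mem_range.1 hj)⟩
          simpa using this
  calc _ ≤ ∑' i, ∑' k, r k * μ {ω | K 0 ω ≤ k} ^ i := ENNReal.tsum_le_tsum hi
    _ = ∑' k, r k * (μ {ω | k < K 0 ω})⁻¹ := by
        rw [ENNReal.tsum_comm]
        simp_rw [ENNReal.tsum_mul_left, ENNReal.tsum_geometric, one_sub_prob_le_eq_prob_lt hK]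

theorem measure_record_tied_le (hX : iIndepFun (fun i ω => (K i ω, Y i ω)) μ)
    (hident : ∀ i, IdentDistrib (K i) (K 0) μ μ) (m : ℕ) :
    μ {ω | IsRecord (K · ω) (m + 1) ∧ ∃ j < m + 1, K j ω = K (m + 1) ω}
      ≤ ∑' k, ((m : ℝ≥0∞) + 1) * (μ {ω | K 0 ω = k} ^ 2 * μ {ω | K 0 ω ≤ k} ^ m) := by
  set tie : ℕ → ℕ → Set Ω := fun k j => {ω | (∀ j' ∈ ({m + 1, j} : Finset ℕ), K j' ω = k) ∧
    ∀ j' ∈ (range (m + 1)).erase j, K j' ω ≤ k}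
  have hcover : {ω | IsRecord (K · ω) (m + 1) ∧ ∃ j < m + 1, K j ω = K (m + 1) ω}
      ⊆ ⋃ k, ⋃ j ∈ range (m + 1), tie k j := by
    rintro ω ⟨hrec, j, hj, heq⟩
    refine Set.mem_iUnion.2 ⟨K (m + 1) ω, Set.mem_iUnion₂.2 ⟨j, mem_range.2 hj, ?_, ?_⟩⟩
    · simp [heq]
    · exact fun j' hj' => hrec j' (mem_range.1 (mem_of_mem_erase hj'))
  have htie : ∀ k, ∀ j ∈ range (m + 1),
      μ (tie k j) ≤ μ {ω | K 0 ω = k} ^ 2 * μ {ω | K 0 ω ≤ k} ^ m := by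
    intro k j hj
    have hj : j < m + 1 := mem_range.1 hj
    have := hX.measure_le_pow_mul_pow (T := {m + 1, j}) (U := (range (m + 1)).erase j)
      (by simp [disjoint_left]) (A := {p | p.1 = k}) (B := {p | p.1 ≤ k})
      .of_discrete .of_discrete (a := μ {ω | K 0 ω = k}) (b := μ {ω | K 0 ω ≤ k})
      (fun j _ => ((hident j).measure_mem_eq (measurableSet_singleton k)).le)
      (fun j _ => ((hident j).measure_mem_eq (measurableSet_Iic (a := k))).le)
      (s := tie k j) fun ω hω => hω
    rwa [card_pair (by omega), card_erase_of_mem (mem_range.2 hj), card_range,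
      Nat.add_sub_cancel] at this
  calc _ ≤ ∑' k, ∑ j ∈ range (m + 1), μ (tie k j) := (measure_mono hcover).trans
        ((measure_iUnion_le _).trans (ENNReal.tsum_le_tsum fun k => measure_biUnion_finset_le _ _))
    _ ≤ _ := ENNReal.tsum_le_tsum fun k => (sum_le_sum (htie k)).trans_eq (by simp)

theorem tsum_measure_record_tied_le [IsProbabilityMeasure μ] (hK : Measurable (K 0))
    (hX : iIndepFun (fun i ω => (K i ω, Y i ω)) μ) (hident : ∀ i, IdentDistrib (K i) (K 0) μ μ) :
    ∑' i, μ {ω | IsRecord (K · ω) i ∧ ∃ j < i, K j ω = K i ω}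
      ≤ ∑' k, (μ {ω | K 0 ω = k} * (μ {ω | k < K 0 ω})⁻¹) ^ 2 := by
  rw [tsum_eq_zero_add' ENNReal.summable]
  calc _ = ∑' m, μ {ω | IsRecord (K · ω) (m + 1) ∧ ∃ j < m + 1, K j ω = K (m + 1) ω} := by
        simp
    _ ≤ ∑' m : ℕ, ∑' k, ((m : ℝ≥0∞) + 1) * (μ {ω | K 0 ω = k} ^ 2 * μ {ω | K 0 ω ≤ k} ^ m) :=
        ENNReal.tsum_le_tsum (measure_record_tied_le hX hident)
    _ = ∑' k, (μ {ω | K 0 ω = k} * (μ {ω | k < K 0 ω})⁻¹) ^ 2 := by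
        rw [ENNReal.tsum_comm]
        congr 1 with k
        simp_rw [mul_left_comm (_ : ℝ≥0∞) (μ {ω | K 0 ω = k} ^ (2 : ℕ)), ENNReal.tsum_mul_left,
          ENNReal.tsum_add_one_mul_pow, one_sub_prob_le_eq_prob_lt hK, mul_pow]

theorem tsum_measure_forall_lt_le_self_ne_top [IsProbabilityMeasure μ] (hK : Measurable (K 0))
    (hX : iIndepFun (fun i ω => (K i ω, Y i ω)) μ) (hident : ∀ i, IdentDistrib (K i) (K 0) μ μ)
    {b t : ℝ} (hb : 0 < b) (ht : t < 1 / 2)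
    (htail : ∀ n : ℕ, 1 ≤ n → ENNReal.ofReal (b * (n : ℝ) ^ (-t)) ≤ μ {ω | n < K 0 ω}) :
    ∑' i, μ {ω | ∀ j < i, K j ω ≤ i} ≠ ⊤ := by
  have hF : ∀ n, 1 ≤ n → (μ {ω | K 0 ω ≤ n}).toReal ≤ 1 - b * (n : ℝ) ^ (-t) := fun n hn => by
    rw [prob_le_eq_one_sub_prob_lt hK, ENNReal.toReal_sub_of_le prob_le_one one_ne_top, toReal_one]
    linarith [(ENNReal.ofReal_le_iff_le_toReal (measure_ne_top _ _)).1 (htail n hn)]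
  refine ne_top_of_le_ne_top
    (summable_pow_of_le_one_sub_mul_rpow hb ht (fun _ => toReal_nonneg) hF).tsum_ofReal_ne_top
    (ENNReal.tsum_le_tsum fun i => (measure_forall_lt_le_le_pow hX hident i i).trans_eq ?_)
  rw [ENNReal.ofReal_pow toReal_nonneg, ENNReal.ofReal_toReal (measure_ne_top _ _)]

theorem tsum_measure_record_tied_ne_top [IsProbabilityMeasure μ] (hK : Measurable (K 0))
    (hX : iIndepFun (fun i ω => (K i ω, Y i ω)) μ) (hident : ∀ i, IdentDistrib (K i) (K 0) μ μ)
    {C : ℝ} (hC : 0 ≤ C)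
    (hhaz : ∀ k, μ {ω | K 0 ω = k} * (μ {ω | k < K 0 ω})⁻¹ ≤ ENNReal.ofReal (C / k)) :
    ∑' i, μ {ω | IsRecord (K · ω) i ∧ ∃ j < i, K j ω = K i ω} ≠ ⊤ := by
  refine ne_top_of_le_ne_top
    ((Real.summable_one_div_nat_pow.2 one_lt_two).mul_left (C ^ 2)).tsum_ofReal_ne_top
    ((tsum_measure_record_tied_le hK hX hident).trans (ENNReal.tsum_le_tsum fun k => ?_))
  calc (μ {ω | K 0 ω = k} * (μ {ω | k < K 0 ω})⁻¹) ^ 2 ≤ ENNReal.ofReal (C / k) ^ 2 :=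
        pow_le_pow_left' (hhaz k) 2
    _ = ENNReal.ofReal (C ^ 2 * (1 / (k : ℝ) ^ 2)) := by
        rw [← ENNReal.ofReal_pow (by positivity), div_pow, mul_one_div]

theorem tsum_measure_record_red_ne_top [IsProbabilityMeasure μ] (hK : Measurable (K 0))
    (hX : iIndepFun (fun i ω => (K i ω, Y i ω)) μ) (hident : ∀ i, IdentDistrib (K i) (K 0) μ μ)
    {C : ℝ} (hC : 0 ≤ C)
    (hhaz : ∀ k, μ {ω | K 0 ω = k} * (μ {ω | k < K 0 ω})⁻¹ ≤ ENNReal.ofReal (C / k))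
    (hred : ∀ i k, μ {ω | K i ω = k ∧ Y i ω = true} ≤ 2⁻¹ ^ k * μ {ω | K i ω = k}) :
    ∑' i, μ {ω | IsRecord (K · ω) i ∧ Y i ω = true} ≠ ⊤ := by
  have hr : ∀ i k, μ {ω | K i ω = k ∧ Y i ω = true} ≤ 2⁻¹ ^ k * μ {ω | K 0 ω = k} := fun i k =>
    (hred i k).trans_eq (congrArg _ ((hident i).measure_mem_eq (measurableSet_singleton k)))
  refine ne_top_of_le_ne_top (b := ∑' k : ℕ, ENNReal.ofReal C * 2⁻¹ ^ k) ?_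
    ((tsum_measure_record_red_le hK hX hident hr).trans (ENNReal.tsum_le_tsum fun k => ?_))
  · rw [ENNReal.tsum_mul_left, ENNReal.tsum_geometric, ENNReal.one_sub_inv_two, inv_inv]
    exact mul_ne_top ofReal_ne_top ofNat_ne_top
  calc 2⁻¹ ^ k * μ {ω | K 0 ω = k} * (μ {ω | k < K 0 ω})⁻¹
      ≤ 2⁻¹ ^ k * ENNReal.ofReal (C / k) := by rw [mul_assoc]; gcongr; exact hhaz k
    _ ≤ ENNReal.ofReal C * 2⁻¹ ^ k := by
        rw [mul_comm]
        gcongr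
        rcases Nat.eq_zero_or_pos k with rfl | hk
        · simpa using hC
        · exact div_le_self hC (Nat.one_le_cast.2 hk)

end Records

theorem stmt_5_general {Ω : Type*} [MeasurableSpace Ω] (μ : Measure Ω) [IsProbabilityMeasure μ]
    (c : ℝ≥0∞)
    (K : ℕ → Ω → ℕ) (Y : ℕ → Ω → Bool)
    (hmeas : ∀ i, Measurable (fun ω => (K i ω, Y i ω)))
    (hindep : iIndepFun (fun i ω => (K i ω, Y i ω)) μ)
    (hpos : ∀ i, ∀ᵐ ω ∂μ, 1 ≤ K i ω)
    (hlaw : ∀ i k, μ {ω | K i ω = k + 1} = c⁻¹ * ((k + 1 : ℕ) : ℝ≥0∞) ^ (-(5/4 : ℝ)))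
    (hred : ∀ i k, μ {ω | K i ω = k + 1 ∧ Y i ω = true}
      = 2⁻¹ ^ (k + 1) * μ {ω | K i ω = k + 1}) :
    ∀ᵐ ω ∂μ, ∃ i₀ : ℕ,
      (∀ i ≥ i₀, i < (Finset.range i).sup (fun j => K j ω)) ∧
      (∀ i ≥ i₀, (∀ j < i, K j ω ≤ K i ω) →
        (∀ j < i, K j ω < K i ω) ∧ Y i ω = false) := by
  have hK : ∀ i, Measurable (K i) := fun i => (hmeas i).fst
  have hzero : ∀ i, μ {ω | K i ω = 0} = 0 := fun i => by
    simpa [Nat.lt_one_iff] using ae_iff.1 (hpos i)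
  have hident : ∀ i, IdentDistrib (K i) (K 0) μ μ := fun i =>
    identDistrib_of_measure_eq (hK i) (hK 0) fun k => by cases k <;> simp only [hzero, hlaw]
  have hred_le : ∀ i k, μ {ω | K i ω = k ∧ Y i ω = true} ≤ 2⁻¹ ^ k * μ {ω | K i ω = k} := by
    rintro i (_ | k)
    · simpa using measure_mono (μ := μ) (t := {ω | K i ω = 0}) fun ω h => h.1
    · exact (hred i k).le
  obtain ⟨a, ha, hq⟩ := exists_pos_measure_eq_ofReal_rpow (hK 0) (hzero 0) (hlaw 0)
  have hs : (0 : ℝ) ≤ 5 / 4 := by norm_num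
  have hhaz := measure_eq_mul_inv_measure_lt_le (hK 0) ha.le hs (hzero 0) hq
  filter_upwards [ae_eventually_notMem <| tsum_measure_forall_lt_le_self_ne_top (hK 0) hindep hident
      (by positivity) (by norm_num) fun n hn => ofReal_mul_rpow_le_measure_lt (hK 0) ha.le hs hq hn,
    ae_eventually_notMem <|
      tsum_measure_record_tied_ne_top (hK 0) hindep hident (by positivity) hhaz,
    ae_eventually_notMem <| tsum_measure_record_red_ne_top (hK 0) hindep hident (by positivity) hhaz
      hred_le] with ω hlow htied hblue
  obtain ⟨i₀, hi₀⟩ := eventually_atTop.1 (hlow.and (htied.and hblue))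
  refine ⟨i₀, fun i hi => ?_, fun i hi hrec => ?_⟩
  · obtain ⟨j, hj, hlt⟩ : ∃ j < i, i < K j ω := by simpa using (hi₀ i hi).1
    exact hlt.trans_le (le_sup (f := fun j => K j ω) (mem_range.2 hj))
  · obtain ⟨-, hnot_tied, hnot_red⟩ := hi₀ i hi
    exact ⟨fun j hj => (hrec j hj).lt_of_ne fun h => hnot_tied ⟨hrec, j, hj, h⟩,
      by simpa using fun h => hnot_red ⟨hrec, h⟩⟩

/-- For the i.i.d. sequence of pairs `(K i, Y i)` where `P(K i = k) = (1/c) k^(-5/4)`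
on the positive integers and, conditionally on `K i = k`, `Y i = red` (encoded `true`)
with probability `2^(-k)`, almost every realization stabilizes: there is `i₀` such that (1) for all `i ≥ i₀`
the running maximum `max {K 0, …, K (i-1)}` exceeds `i`, and (2) every record-time
`i ≥ i₀` is simple and has `Y i = blue` (encoded `false`). -/
theorem stmt_5 {Ω : Type*} [MeasurableSpace Ω] (μ : Measure Ω) [IsProbabilityMeasure μ]
    (c : ℝ≥0∞) (hc : c = ∑' j : ℕ, ((j + 1 : ℕ) : ℝ≥0∞) ^ (-(5/4 : ℝ)))
    (K : ℕ → Ω → ℕ) (Y : ℕ → Ω → Bool)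
    (hmeas : ∀ i, Measurable (fun ω => (K i ω, Y i ω)))
    (hindep : iIndepFun (fun i ω => (K i ω, Y i ω)) μ)
    (hpos : ∀ i, ∀ᵐ ω ∂μ, 1 ≤ K i ω)
    (hlaw : ∀ i k, μ {ω | K i ω = k + 1} = c⁻¹ * ((k + 1 : ℕ) : ℝ≥0∞) ^ (-(5/4 : ℝ)))
    (hred : ∀ i k, μ {ω | K i ω = k + 1 ∧ Y i ω = true}
      = 2⁻¹ ^ (k + 1) * μ {ω | K i ω = k + 1}) :
    ∀ᵐ ω ∂μ, ∃ i₀ : ℕ,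
      (∀ i ≥ i₀, i < (Finset.range i).sup (fun j => K j ω)) ∧
      (∀ i ≥ i₀, (∀ j < i, K j ω ≤ K i ω) →
        (∀ j < i, K j ω < K i ω) ∧ Y i ω = false) :=
  stmt_5_general μ c K Y hmeas hindep hpos hlaw hred
end

section
/- If Γ is an ICC group (every nontrivial element has an infinite conjugacy class), then for every finite subset A of Γ there exists an element b ∈ Γ which is an A-lock. -/
open scoped Pointwise

private lemma centralizer_not_finiteIndex_of_icc {Γ : Type*} [Group Γ] {h : Γ}
    (hinf : {k : Γ | ∃ x : Γ, x * h * x⁻¹ = k}.Infinite) :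
    ¬ (Subgroup.centralizer {h}).FiniteIndex := by
  intro hfi
  apply hinf
  classical
  have wd : ∀ a b : Γ,
      @Setoid.r _ (QuotientGroup.leftRel (Subgroup.centralizer {h})) a b →
      a * h * a⁻¹ = b * h * b⁻¹ := by
    intro a b hab
    have hc : a⁻¹ * b ∈ Subgroup.centralizer {h} :=
      (QuotientGroup.leftRel_apply).mp hab
    have hc' : h * (a⁻¹ * b) = (a⁻¹ * b) * h :=
      (Subgroup.mem_centralizer_iff.mp hc) h rfl
    calc a * h * a⁻¹ = a * (h * (a⁻¹ * b)) * b⁻¹ := by group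
      _ = a * ((a⁻¹ * b) * h) * b⁻¹ := by rw [hc']
      _ = b * h * b⁻¹ := by group
  set F : Γ ⧸ Subgroup.centralizer {h} → Γ :=
    fun q => Quotient.liftOn' q (fun x => x * h * x⁻¹) wd with hF
  have : {k : Γ | ∃ x : Γ, x * h * x⁻¹ = k} ⊆ Set.range F := by
    rintro k ⟨x, hx⟩
    exact ⟨QuotientGroup.mk x, hx⟩
  exact (Set.finite_range F).subset this

/-- If `Γ` is a (non-trivial) ICC group, i.e. every element other than the identity has
an infinite conjugacy class, then for every finite subset `A` of `Γ` there exists an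
`A`-lock: an element `b` such that `a₁ b a₂ = a₁' b a₂'` with entries in `A` forces
`a₁ = a₁'` and `a₂ = a₂'`, and `A` is disjoint from `A b A`. -/
theorem stmt_7 {Γ : Type*} [Group Γ] [Nontrivial Γ]
    (hICC : ∀ g : Γ, g ≠ 1 → {h : Γ | ∃ x : Γ, x * g * x⁻¹ = h}.Infinite)
    (A : Finset Γ) :
    ∃ b : Γ,
      (∀ a₁ ∈ A, ∀ a₂ ∈ A, ∀ a₁' ∈ A, ∀ a₂' ∈ A,
        a₁ * b * a₂ = a₁' * b * a₂' → a₁ = a₁' ∧ a₂ = a₂') ∧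
      Disjoint (↑A : Set Γ) {h : Γ | ∃ a₁ ∈ A, ∃ a₂ ∈ A, h = a₁ * b * a₂} := by
  classical
  -- `Γ` is infinite
  have hΓ : Infinite Γ := by
    obtain ⟨g0, hg0⟩ := exists_ne (1 : Γ)
    have := (hICC g0 hg0).to_subtype
    exact Infinite.of_injective
      (Subtype.val : {h : Γ | ∃ x : Γ, x * g0 * x⁻¹ = h} → Γ) Subtype.val_injective
  by_contra h0
  push_neg at h0
  -- the covering data
  set ι := (Γ × Γ) ⊕ Γ with hι
  set s : Finset ι := ((A⁻¹ * A) ×ˢ (A * A⁻¹)).disjSum (A⁻¹ * (A * A⁻¹)) with hs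
  set gf : ι → Γ := Sum.elim
    (fun p => if hp : ∃ x : Γ, x⁻¹ * p.1 * x = p.2 then hp.choose else 1) id with hgf
  set Hf : ι → Subgroup Γ := Sum.elim
    (fun p => if p.1 ≠ 1 ∧ ∃ x : Γ, x⁻¹ * p.1 * x = p.2
      then Subgroup.centralizer {p.2} else ⊥) (fun _ => ⊥) with hHf
  have hcovers : ⋃ i ∈ s, (gf i) • (Hf i : Set Γ) = Set.univ := by
    rw [Set.eq_univ_iff_forall]
    intro b
    rw [Set.mem_iUnion₂]
    by_cases hP : ∀ a₁ ∈ A, ∀ a₂ ∈ A, ∀ a₁' ∈ A, ∀ a₂' ∈ A,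
        a₁ * b * a₂ = a₁' * b * a₂' → a₁ = a₁' ∧ a₂ = a₂'
    · -- then the disjointness fails
      have hnd := h0 b hP
      rw [Set.not_disjoint_iff] at hnd
      obtain ⟨a, haA, a₁, ha₁, a₂, ha₂, haeq⟩ := hnd
      have hbeq : b = a₁⁻¹ * (a * a₂⁻¹) := by rw [haeq]; group
      refine ⟨Sum.inr b, ?_, ?_⟩
      · rw [hs, Finset.inr_mem_disjSum, hbeq]
        exact Finset.mul_mem_mul (Finset.inv_mem_inv ha₁)
          (Finset.mul_mem_mul haA (Finset.inv_mem_inv ha₂))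
      · refine Set.mem_smul_set.mpr ⟨1, ?_, ?_⟩
        · simp [hHf]
        · simp [hgf]
    · push_neg at hP
      obtain ⟨a₁, ha₁, a₂, ha₂, a₁', ha₁', a₂', ha₂', heq, hne⟩ := hP
      have hA1 : a₁ ≠ a₁' := by
        intro h1
        subst h1
        exact hne rfl (mul_left_cancel heq)
      set g : Γ := a₁'⁻¹ * a₁ with hgdef
      set k : Γ := a₂' * a₂⁻¹ with hkdef
      have hgne : g ≠ 1 := by
        intro h1
        apply hA1
        rw [hgdef] at h1
        have := inv_mul_eq_one.mp h1
        exact this.symm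
      have key : b⁻¹ * g * b = k := by
        calc b⁻¹ * g * b = b⁻¹ * a₁'⁻¹ * (a₁ * b * a₂) * a₂⁻¹ := by rw [hgdef]; group
          _ = b⁻¹ * a₁'⁻¹ * (a₁' * b * a₂') * a₂⁻¹ := by rw [heq]
          _ = k := by rw [hkdef]; group
      have hpex : ∃ x : Γ, x⁻¹ * g * x = k := ⟨b, key⟩
      refine ⟨Sum.inl (g, k), ?_, ?_⟩
      · rw [hs, Finset.inl_mem_disjSum, Finset.mem_product]
        constructor
        · exact Finset.mul_mem_mul (Finset.inv_mem_inv ha₁') ha₁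
        · exact Finset.mul_mem_mul ha₂' (Finset.inv_mem_inv ha₂)
      · have hgf1 : gf (Sum.inl (g, k)) = hpex.choose := by
          simp only [hgf, Sum.elim_inl, dif_pos hpex]
        have hcond : g ≠ 1 ∧ ∃ x : Γ, x⁻¹ * g * x = k := ⟨hgne, hpex⟩
        have hHf1 : Hf (Sum.inl (g, k)) = Subgroup.centralizer {k} := by
          simp only [hHf, Sum.elim_inl, if_pos hcond]
        rw [hgf1, hHf1]
        set x₀ : Γ := hpex.choose with hx₀def
        have hx₀ : x₀⁻¹ * g * x₀ = k := hpex.choose_spec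
        rw [Set.mem_smul_set_iff_inv_smul_mem]
        rw [SetLike.mem_coe, Subgroup.mem_centralizer_iff]
        intro y hy
        rw [Set.mem_singleton_iff] at hy
        subst hy
        have h1 : g * x₀ = x₀ * k := by rw [← hx₀]; group
        have h2 : g * b = b * k := by rw [← key]; group
        rw [smul_eq_mul]
        show k * (x₀⁻¹ * b) = (x₀⁻¹ * b) * k
        calc k * (x₀⁻¹ * b) = x₀⁻¹ * (g * x₀) * x₀⁻¹ * b := by rw [h1]; group
          _ = x₀⁻¹ * (g * b) := by group
          _ = x₀⁻¹ * (b * k) := by rw [h2]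
          _ = (x₀⁻¹ * b) * k := by group
  obtain ⟨i, his, hfin⟩ := Subgroup.exists_finiteIndex_of_leftCoset_cover hcovers
  have hbot : ¬ (⊥ : Subgroup Γ).FiniteIndex := by
    intro hb
    have := hb.index_ne_zero
    rw [Subgroup.index_bot] at this
    haveI := Nat.finite_of_card_ne_zero this
    exact not_finite Γ
  match i with
  | Sum.inr x =>
    exact hbot (by simpa only [hHf, Sum.elim_inr] using hfin)
  | Sum.inl p =>
    simp only [hHf, Sum.elim_inl] at hfin
    split_ifs at hfin with hc
    · obtain ⟨hp1, x, hx⟩ := hc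
      have hp2 : p.2 ≠ 1 := by
        intro h1
        apply hp1
        rw [h1] at hx
        have : p.1 * x = x := by
          have := hx
          calc p.1 * x = x * (x⁻¹ * p.1 * x) := by group
            _ = x * 1 := by rw [hx]
            _ = x := mul_one x
        exact mul_right_cancel (by rw [this, one_mul])
      exact centralizer_not_finiteIndex_of_icc (hICC p.2 hp2) hfin
    · exact hbot hfin
end

section
/- Let ν be a non-degenerate probability measure on a countable group G. If for every g ∈ G the total variation norm ‖g·ν^{*n} − ν^{*n}‖ tends to 0 as n → ∞, then the Poisson (tail) boundary of the ν-random walk on G is trivial. -/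
open MeasureTheory Filter

section

variable {G : Type*} [Group G] [MeasurableSpace G]

/-- The right random walk `Z n = X 1 ⋯ X n` read off the coordinates of `ω : ℕ → G`. -/
def rightWalk (n : ℕ) (ω : ℕ → G) : G := ((List.range n).map ω).prod

/-- The tail σ-algebra `⋂ j, σ(Z j, Z (j+1), …)` of a walk `Z`. -/
def tailAlg (Z : ℕ → (ℕ → G) → G) : MeasurableSpace (ℕ → G) :=
  ⨅ j : ℕ, ⨆ i : ℕ, ⨆ _ : j ≤ i, MeasurableSpace.comap (Z i) ⊤

/-- The tail boundary of the walk `Z` is trivial under `P`. -/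
def TailTrivial (Z : ℕ → (ℕ → G) → G) (P : Measure (ℕ → G)) : Prop :=
  ∀ s : Set (ℕ → G), MeasurableSet[tailAlg Z] s → P s = 0 ∨ P s = 1

/-- `P` makes the coordinates of `ℕ → G` i.i.d. with common law `ν`. -/
def IsIIDMeasure (ν : PMF G) (P : Measure (ℕ → G)) : Prop :=
  ∀ (n : ℕ) (f : ℕ → G), P {ω | ∀ i < n, ω i = f i} = ∏ i ∈ Finset.range n, ν (f i)

/-- `ν` is non-degenerate: its support generates `G` as a semigroup. -/
def NonDegenerate (ν : PMF G) : Prop :=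
  ∀ g : G, ∃ l : List G, l ≠ [] ∧ (∀ x ∈ l, x ∈ ν.support) ∧ l.prod = g

/-- Convolution of probability measures on a group. -/
noncomputable def PMF.conv (μ ρ : PMF G) : PMF G := μ.bind fun a => ρ.map (a * ·)

/-- `n`-fold convolution power `ν^{*n}`. -/
noncomputable def convPow (ν : PMF G) : ℕ → PMF G
  | 0 => PMF.pure 1
  | n + 1 => (convPow ν n).conv ν

end

/-!
A tail event `A` can be written, for every `n`, as `{(Z (n + i))ᵢ ∈ Sₙ}`. Fix an event `C` of the
first `k` steps on which `Z k = b`. Splitting the next `m` steps off as an increment `g ∼ ν^{*m}`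
gives `P (A ∩ C) = P C · Φₘ b` and `P A = ∑ₐ ν^{*k}(a) Φₘ a`, where `Φₘ c = ∑_g ν^{*m}(g) hₘ(c g)`
for a function `hₘ` with values in `[0, 1]`. Hence `|Φₘ c - Φₘ 1| ≤ ‖c·ν^{*m} - ν^{*m}‖ → 0`, and
letting `m → ∞` shows that `A` is independent of `C`. These events generate the product
σ-algebra, so `A` is independent of itself and `P A ∈ {0, 1}`.
-/

open Set ProbabilityTheory Topology
open scoped ENNReal

theorem measure_eq_tsum_inter_preimage_singleton {Ω β : Type*} [MeasurableSpace Ω]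
    [MeasurableSpace β] [Countable β] [MeasurableSingletonClass β] (μ : Measure Ω) {X : Ω → β}
    (hX : Measurable X) (E : Set Ω) : μ E = ∑' b, μ (E ∩ X ⁻¹' {b}) := by
  have hfiber (b : β) : MeasurableSet (X ⁻¹' {b}) := hX (measurableSet_singleton b)
  have hcover : μ E = μ.restrict E (⋃ b, X ⁻¹' {b}) := by
    rw [← preimage_iUnion, iUnion_of_singleton, preimage_univ, Measure.restrict_apply_univ]
  rw [hcover, measure_iUnion (fun b c hbc => (disjoint_singleton.2 hbc).preimage X) hfiber]
  simp only [Measure.restrict_apply (hfiber _), inter_comm]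

theorem measure_eq_zero_or_one_of_forall_measure_inter_eq {Ω : Type*} [mΩ : MeasurableSpace Ω]
    {μ : Measure Ω} [IsProbabilityMeasure μ] {C : Set (Set Ω)} (hC : IsPiSystem C)
    (hgen : MeasurableSpace.generateFrom C = mΩ) {A : Set Ω} (hA : MeasurableSet A)
    (hind : ∀ s ∈ C, μ (A ∩ s) = μ A * μ s) : μ A = 0 ∨ μ A = 1 := by
  have hCA : Indep (.generateFrom {A}) (.generateFrom C) μ :=
    IndepSets.indep' (by simpa) (fun s hs => hgen ▸ .basic s hs) (.singleton A) hC
      (IndepSets_iff _ _ _ |>.mpr fun _ s hA' hs => mem_singleton_iff.mp hA' ▸ hind s hs)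
  exact measure_eq_zero_or_one_of_indepSet_self
    (hCA.indepSet_of_measurableSet (.basic A rfl) (hgen ▸ hA))

theorem abs_tsum_mul_sub_tsum_mul_le {ι : Type*} {p q h : ι → ℝ} (hp : Summable p)
    (hq : Summable q) (hh : ∀ i, |h i| ≤ 1) :
    |∑' i, p i * h i - ∑' i, q i * h i| ≤ ∑' i, |p i - q i| := by
  have hmul {r : ι → ℝ} (hr : Summable r) : Summable fun i => r i * h i :=
    hr.abs.of_norm_bounded (f := fun i => r i * h i) fun i => by
      rw [Real.norm_eq_abs, abs_mul]
      exact mul_le_of_le_one_right (abs_nonneg _) (hh i)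
  rw [← (hmul hp).tsum_sub (hmul hq)]
  refine tsum_of_norm_bounded (f := fun i => p i * h i - q i * h i) (hp.sub hq).abs.hasSum
    fun i => ?_
  rw [Real.norm_eq_abs, ← sub_mul, abs_mul]
  exact mul_le_of_le_one_right (abs_nonneg _) (hh i)

theorem tendsto_sub_tsum_mul_of_tendsto_sub {ι : Type*} {κ : ι → ℝ} (hκ0 : ∀ a, 0 ≤ κ a)
    (hκ : HasSum κ 1) {φ : ℕ → ι → ℝ} (hφ : ∀ m a, φ m a ∈ Icc 0 1)
    (hlim : ∀ a b, Tendsto (fun m => φ m b - φ m a) atTop (𝓝 0)) (b : ι) :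
    Tendsto (fun m => φ m b - ∑' a, κ a * φ m a) atTop (𝓝 0) := by
  have hdiff_le (m : ℕ) (a : ι) : |φ m b - φ m a| ≤ 1 := by
    obtain ⟨⟨ha0, ha1⟩, hb0, hb1⟩ := And.intro (hφ m a) (hφ m b)
    exact abs_le.mpr ⟨by linarith, by linarith⟩
  have havg (m : ℕ) : φ m b - ∑' a, κ a * φ m a = ∑' a, κ a * (φ m b - φ m a) := by
    have hs : Summable fun a => κ a * φ m a :=
      hκ.summable.of_nonneg_of_le (fun a => mul_nonneg (hκ0 a) (hφ m a).1)
        fun a => mul_le_of_le_one_right (hκ0 a) (hφ m a).2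
    simp_rw [mul_sub]
    rw [(hκ.summable.mul_right _).tsum_sub hs, tsum_mul_right, hκ.tsum_eq, one_mul]
  simp_rw [havg]
  have h := tendsto_tsum_of_dominated_convergence (g := fun _ => (0 : ℝ)) hκ.summable
    (fun a => by simpa using (hlim a b).const_mul (κ a))
    (.of_forall fun m a => by
      rw [Real.norm_eq_abs, abs_mul, abs_of_nonneg (hκ0 a)]
      exact mul_le_of_le_one_right (hκ0 a) (hdiff_le m a))
  rwa [tsum_zero] at h

theorem PMF.hasSum_toReal {α : Type*} (ρ : PMF α) : HasSum (fun a => (ρ a).toReal) 1 := by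
  have h := (ENNReal.summable_toReal (ρ.tsum_coe ▸ ENNReal.one_ne_top)).hasSum
  rwa [← ENNReal.tsum_toReal_eq fun a => ρ.apply_ne_top a, ρ.tsum_coe, ENNReal.toReal_one] at h

theorem PMF.tsum_mul_le_one {α : Type*} (ρ : PMF α) {H : α → ℝ≥0∞} (hH : ∀ a, H a ≤ 1) :
    ∑' a, ρ a * H a ≤ 1 :=
  (ENNReal.tsum_le_tsum fun a => mul_le_of_le_one_right' (hH a)).trans_eq ρ.tsum_coe

theorem abs_toReal_tsum_mul_translate_sub_le {G : Type*} [Group G] (ρ : PMF G)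
    {H : G → ℝ≥0∞} (hH : ∀ g, H g ≤ 1) (c : G) :
    |(∑' g, ρ g * H (c * g)).toReal - (∑' g, ρ g * H g).toReal| ≤
      ∑' x, |(ρ (c⁻¹ * x)).toReal - (ρ x).toReal| := by
  have hfin (x : G) (r : ℝ≥0∞) (hr : r ≠ ⊤) : r * H x ≠ ⊤ :=
    ENNReal.mul_ne_top hr ((hH x).trans_lt ENNReal.one_lt_top).ne
  have hshift : ∑' g, ρ g * H (c * g) = ∑' x, ρ (c⁻¹ * x) * H x := by
    rw [← (Equiv.mulLeft c).tsum_eq fun x => ρ (c⁻¹ * x) * H x]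
    simp
  rw [hshift, ENNReal.tsum_toReal_eq fun x => hfin x _ (ρ.apply_ne_top _),
    ENNReal.tsum_toReal_eq fun x => hfin x _ (ρ.apply_ne_top _)]
  simp only [ENNReal.toReal_mul]
  have hsummable : Summable fun x => (ρ x).toReal := ρ.hasSum_toReal.summable
  have hsummable' : Summable fun x => (ρ (c⁻¹ * x)).toReal :=
    hsummable.comp_injective (mul_right_injective c⁻¹)
  refine abs_tsum_mul_sub_tsum_mul_le hsummable' hsummable fun x => ?_
  rw [abs_of_nonneg ENNReal.toReal_nonneg]
  exact ENNReal.toReal_le_of_le_ofReal zero_le_one (by simpa using hH x)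

theorem PMF.eq_mul_tsum_of_tendsto_translate_sub {G : Type*} [Group G] (κ : PMF G)
    {Φ : ℕ → G → ℝ≥0∞} (hΦ : ∀ m c, Φ m c ≤ 1)
    (hlim : ∀ c, Tendsto (fun m => (Φ m c).toReal - (Φ m 1).toReal) atTop (𝓝 0))
    {w x y : ℝ≥0∞} (hw : w ≠ ⊤) (b : G) (hx : ∀ m, x = w * Φ m b)
    (hy : ∀ m, y = ∑' a, κ a * Φ m a) : x = w * y := by
  have hΦ_ne_top (m : ℕ) (c : G) : Φ m c ≠ ⊤ := ((hΦ m c).trans_lt ENNReal.one_lt_top).ne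
  have hy_real (m : ℕ) : y.toReal = ∑' a, (κ a).toReal * (Φ m a).toReal := by
    rw [hy m, ENNReal.tsum_toReal_eq fun a => ENNReal.mul_ne_top (κ.apply_ne_top a) (hΦ_ne_top m a)]
    simp only [ENNReal.toReal_mul]
  have hconv := tendsto_sub_tsum_mul_of_tendsto_sub (fun _ => ENNReal.toReal_nonneg)
    κ.hasSum_toReal
    (fun m c => ⟨ENNReal.toReal_nonneg,
      ENNReal.toReal_le_of_le_ofReal zero_le_one (by simpa using hΦ m c)⟩)
    (fun a c => by simpa using (hlim c).sub (hlim a)) b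
  have hconst : Tendsto (fun _ : ℕ => x.toReal - (w * y).toReal) atTop (𝓝 0) := by
    refine (mul_zero w.toReal ▸ hconv.const_mul w.toReal).congr fun m => ?_
    rw [ENNReal.toReal_mul, hy_real m, hx m, ENNReal.toReal_mul, mul_sub]
  have hx_ne_top : x ≠ ⊤ := hx 0 ▸ ENNReal.mul_ne_top hw (hΦ_ne_top 0 b)
  have hy_ne_top : y ≠ ⊤ := hy 0 ▸ (κ.tsum_mul_le_one (hΦ 0)).trans_lt ENNReal.one_lt_top |>.ne
  refine (ENNReal.toReal_eq_toReal_iff' hx_ne_top (ENNReal.mul_ne_top hw hy_ne_top)).mp ?_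
  exact sub_eq_zero.mp (tendsto_nhds_unique tendsto_const_nhds hconst)

section Walk

variable {G : Type*} [Group G]

theorem convPow_succ_apply (ν : PMF G) (n : ℕ) (x : G) :
    convPow ν (n + 1) x = ∑' a, convPow ν n a * ν (a⁻¹ * x) := by
  simp only [convPow, PMF.conv, PMF.bind_apply]
  refine tsum_congr fun a => congrArg _ ?_
  rw [PMF.map_apply, tsum_eq_single (a⁻¹ * x) fun g hg => if_neg fun h => hg (by simp [h])]
  simp

def seqShift (n : ℕ) (ω : ℕ → G) : ℕ → G := fun i => ω (n + i)

def rightWalkFrom (N : ℕ) (ω : ℕ → G) : ℕ → G := fun i => rightWalk (N + i) ω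

def translatedWalk (c : G) (ω : ℕ → G) : ℕ → G := fun i => c * rightWalk i ω

theorem rightWalk_succ (n : ℕ) (ω : ℕ → G) : rightWalk (n + 1) ω = rightWalk n ω * ω n := by
  simp [rightWalk, List.range_succ]

theorem rightWalk_add (n m : ℕ) (ω : ℕ → G) :
    rightWalk (n + m) ω = rightWalk n ω * rightWalk m (seqShift n ω) := by
  simp only [rightWalk, List.range_add, List.map_append, List.prod_append, List.map_map]
  rfl

theorem rightWalkFrom_add (k m : ℕ) (ω : ℕ → G) :
    rightWalkFrom (k + m) ω =
      translatedWalk (rightWalk k ω * rightWalk m (seqShift k ω)) (seqShift (k + m) ω) := by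
  funext i
  simp only [rightWalkFrom, translatedWalk, rightWalk_add (k + m), rightWalk_add k m]

theorem dependsOn_rightWalk (n : ℕ) : DependsOn (rightWalk (G := G) n) (Iio n) := by
  intro ω ω' h
  exact congrArg List.prod (List.map_congr_left fun i hi => h i (List.mem_range.mp hi))

theorem dependsOn_preimage_rightWalk (n : ℕ) (s : Set G) :
    DependsOn (· ∈ rightWalk n ⁻¹' s) (Iio n) :=
  fun _ _ h => congrArg (· ∈ s) (dependsOn_rightWalk n h)

end Walk

section PrefixSets

variable {G : Type*}

def prefixSet (n : ℕ) (f : ℕ → G) : Set (ℕ → G) := {ω | ∀ i < n, ω i = f i}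

def prefixSets : Set (Set (ℕ → G)) := {s | ∃ n f, s = prefixSet n f}

def initSeg (n : ℕ) (ω : ℕ → G) : Fin n → G := fun i => ω i

theorem prefixSet_eq_preimage_initSeg (n : ℕ) (f : ℕ → G) :
    prefixSet n f = initSeg n ⁻¹' {initSeg n f} := by
  ext ω
  simp [prefixSet, initSeg, funext_iff, Fin.forall_iff]

theorem mem_prefixSet_self (n : ℕ) (ω : ℕ → G) : ω ∈ prefixSet n ω := fun _ _ => rfl

theorem prefixSet_subset_of_dependsOn {N : ℕ} {B : Set (ℕ → G)} (hB : DependsOn (· ∈ B) (Iio N))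
    {ω : ℕ → G} (hω : ω ∈ B) : prefixSet N ω ⊆ B :=
  fun _ hω' => (hB fun i hi => (hω' i hi).symm).mp hω

theorem dependsOn_prefixSet (n : ℕ) (f : ℕ → G) : DependsOn (· ∈ prefixSet n f) (Iio n) :=
  fun _ _ h => propext ⟨fun hω i hi => (h i hi).symm.trans (hω i hi),
    fun hω i hi => (h i hi).trans (hω i hi)⟩

theorem isPiSystem_prefixSets : IsPiSystem (prefixSets (G := G)) := by
  rintro _ ⟨n, f, rfl⟩ _ ⟨m, f', rfl⟩ ⟨ω, hωf, hωf'⟩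
  wlog hnm : n ≤ m generalizing n m f f'
  · rw [inter_comm]
    exact this m f' n f hωf' hωf (le_of_not_ge hnm)
  refine ⟨m, f', (inter_subset_right).antisymm fun ω' hω' => ⟨fun i hi => ?_, hω'⟩⟩
  have hi' := hi.trans_le hnm
  rw [hω' i hi', ← hωf' i hi', hωf i hi]

/-- `B` is the union of the countably many distinct sets `prefixSet N ω`, `ω ∈ B`. -/
theorem measurableSet_generateFrom_prefixSets_of_dependsOn [Countable G] {N : ℕ}
    {B : Set (ℕ → G)} (hB : DependsOn (· ∈ B) (Iio N)) :
    MeasurableSet[.generateFrom prefixSets] B := by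
  have hunion : B = ⋃ v ∈ initSeg N '' B, initSeg N ⁻¹' {v} := by
    rw [biUnion_image]
    simp only [← prefixSet_eq_preimage_initSeg]
    exact Subset.antisymm (fun ω hω => mem_biUnion hω (mem_prefixSet_self N ω))
      (iUnion₂_subset fun _ hω => prefixSet_subset_of_dependsOn hB hω)
  rw [hunion]
  refine MeasurableSet.biUnion (to_countable _) ?_
  rintro _ ⟨ω, -, rfl⟩
  exact .basic _ ⟨N, ω, (prefixSet_eq_preimage_initSeg N ω).symm⟩

variable [MeasurableSpace G]

theorem measurable_initSeg (n : ℕ) : Measurable (initSeg (G := G) n) :=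
  measurable_pi_lambda _ fun _ => measurable_pi_apply _

variable [Countable G] [DiscreteMeasurableSpace G]

theorem measurableSet_prefixSet (n : ℕ) (f : ℕ → G) : MeasurableSet (prefixSet n f) := by
  rw [prefixSet_eq_preimage_initSeg]
  exact measurable_initSeg n (measurableSet_singleton _)

theorem generateFrom_prefixSets :
    MeasurableSpace.generateFrom (prefixSets (G := G)) = MeasurableSpace.pi := by
  refine le_antisymm (MeasurableSpace.generateFrom_le ?_) (iSup_le fun i => ?_)
  · rintro _ ⟨n, f, rfl⟩
    exact measurableSet_prefixSet n f
  · refine (@measurable_to_countable' _ _ _ _ (.generateFrom prefixSets) (fun ω : ℕ → G => ω i)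
      fun g => ?_).comap_le
    exact measurableSet_generateFrom_prefixSets_of_dependsOn (N := i + 1)
      fun ω ω' h => by simp [h i (Nat.lt_succ_self i)]

theorem measurableSet_of_dependsOn {N : ℕ} {B : Set (ℕ → G)} (hB : DependsOn (· ∈ B) (Iio N)) :
    MeasurableSet B :=
  generateFrom_prefixSets.le _ (measurableSet_generateFrom_prefixSets_of_dependsOn hB)

end PrefixSets

section IID

variable {G : Type*}

def seqAppend (n : ℕ) (f f' : ℕ → G) : ℕ → G := fun i => if i < n then f i else f' (i - n)

theorem prefixSet_inter_preimage_seqShift (n m : ℕ) (f f' : ℕ → G) :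
    prefixSet n f ∩ seqShift n ⁻¹' prefixSet m f' = prefixSet (n + m) (seqAppend n f f') := by
  ext ω
  simp only [prefixSet, seqShift, seqAppend, mem_inter_iff, mem_preimage, mem_ofPred_eq]
  constructor
  · rintro ⟨h, h'⟩ i hi
    split_ifs with hin
    · exact h i hin
    · simpa [Nat.add_sub_cancel' (not_lt.mp hin)] using h' (i - n) (by omega)
  · intro h
    exact ⟨fun i hi => by simpa [hi] using h i (by omega),
      fun i hi => by simpa using h (n + i) (by omega)⟩

variable [MeasurableSpace G] {ν : PMF G} {P : Measure (ℕ → G)}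

theorem measurable_seqShift (n : ℕ) : Measurable (seqShift (G := G) n) :=
  measurable_pi_lambda _ fun _ => measurable_pi_apply _

theorem measure_prefixSet (hiid : IsIIDMeasure ν P) (n : ℕ) (f : ℕ → G) :
    P (prefixSet n f) = ∏ i ∈ Finset.range n, ν (f i) :=
  hiid n f

variable [Countable G] [DiscreteMeasurableSpace G] [IsProbabilityMeasure P]

theorem measure_prefixSet_inter_preimage_seqShift (hiid : IsIIDMeasure ν P) (n : ℕ)
    (f : ℕ → G) {T : Set (ℕ → G)} (hT : MeasurableSet T) :
    P (prefixSet n f ∩ seqShift n ⁻¹' T) = P (prefixSet n f) * P T := by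
  have hmap : (P.restrict (prefixSet n f)).map (seqShift n) = P (prefixSet n f) • P := by
    refine ext_of_generate_finite _ generateFrom_prefixSets.symm isPiSystem_prefixSets ?_ ?_
    · rintro _ ⟨m, f', rfl⟩
      rw [Measure.map_apply (measurable_seqShift n) (measurableSet_prefixSet m f'),
        Measure.restrict_apply (measurable_seqShift n (measurableSet_prefixSet m f')), inter_comm,
        prefixSet_inter_preimage_seqShift, Measure.smul_apply, smul_eq_mul]
      simp only [measure_prefixSet hiid, Finset.prod_range_add, seqAppend]
      congr 1 <;> refine Finset.prod_congr rfl fun i hi => ?_ <;> simp_all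
    · simp [Measure.map_apply (measurable_seqShift n) MeasurableSet.univ]
  simpa [Measure.map_apply (measurable_seqShift n) hT,
    Measure.restrict_apply (measurable_seqShift n hT), inter_comm] using congrArg (· T) hmap

theorem measure_inter_preimage_seqShift_of_dependsOn (hiid : IsIIDMeasure ν P) {N : ℕ}
    {B : Set (ℕ → G)} (hB : DependsOn (· ∈ B) (Iio N)) {T : Set (ℕ → G)} (hT : MeasurableSet T) :
    P (B ∩ seqShift N ⁻¹' T) = P B * P T := by
  rw [measure_eq_tsum_inter_preimage_singleton P (measurable_initSeg N),
    measure_eq_tsum_inter_preimage_singleton P (measurable_initSeg N) B, ← ENNReal.tsum_mul_right]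
  refine tsum_congr fun v => ?_
  rw [inter_right_comm]
  rcases (B ∩ initSeg N ⁻¹' {v}).eq_empty_or_nonempty with hempty | ⟨ω, hωB, rfl⟩
  · simp [hempty]
  · have hfiber : B ∩ initSeg N ⁻¹' {initSeg N ω} = prefixSet N ω := by
      rw [← prefixSet_eq_preimage_initSeg]
      exact inter_eq_right.mpr (prefixSet_subset_of_dependsOn hB hωB)
    rw [hfiber, measure_prefixSet_inter_preimage_seqShift hiid N ω hT]

end IID

section RandomWalk

variable {G : Type*} [Group G] [MeasurableSpace G] [DiscreteMeasurableSpace G]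

theorem exists_eq_preimage_rightWalkFrom_of_tail {A : Set (ℕ → G)}
    (hA : MeasurableSet[tailAlg rightWalk] A) (N : ℕ) :
    ∃ S, MeasurableSet S ∧ A = rightWalkFrom N ⁻¹' S := by
  have hle : tailAlg (rightWalk (G := G)) ≤ .comap (rightWalkFrom N) MeasurableSpace.pi := by
    refine (iInf_le _ N).trans (iSup₂_le fun i hi => ?_)
    rintro _ ⟨s, -, rfl⟩
    refine ⟨(fun v => v (i - N)) ⁻¹' s, measurable_pi_apply _ (.of_discrete), ?_⟩
    ext ω
    simp [rightWalkFrom, Nat.add_sub_cancel' hi]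
  obtain ⟨S, hS, rfl⟩ := hle A hA
  exact ⟨S, hS, rfl⟩

variable [Countable G] {ν : PMF G} {P : Measure (ℕ → G)} [IsProbabilityMeasure P]

theorem measurable_rightWalk (n : ℕ) : Measurable (rightWalk (G := G) n) :=
  measurable_to_countable' fun g => measurableSet_of_dependsOn (dependsOn_preimage_rightWalk n {g})

theorem measurable_rightWalkFrom (N : ℕ) : Measurable (rightWalkFrom (G := G) N) :=
  measurable_pi_lambda _ fun i => measurable_rightWalk (N + i)

theorem measurable_translatedWalk (c : G) : Measurable (translatedWalk c) :=
  measurable_pi_lambda _ fun i => (measurable_rightWalk i).const_mul c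

theorem measure_preimage_rightWalk (hiid : IsIIDMeasure ν P) (m : ℕ) (g : G) :
    P (rightWalk m ⁻¹' {g}) = convPow ν m g := by
  induction m generalizing g with
  | zero =>
    have hconst : rightWalk (G := G) 0 = fun _ => 1 := rfl
    by_cases h : g = 1 <;> simp [hconst, convPow, PMF.pure_apply, h, eq_comm]
  | succ m ih =>
    rw [measure_eq_tsum_inter_preimage_singleton P (measurable_rightWalk m), convPow_succ_apply]
    refine tsum_congr fun a => ?_
    have hstep : rightWalk (m + 1) ⁻¹' {g} ∩ rightWalk m ⁻¹' {a} =
        rightWalk m ⁻¹' {a} ∩ seqShift m ⁻¹' prefixSet 1 (fun _ => a⁻¹ * g) := by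
      ext ω
      simp only [mem_inter_iff, mem_preimage, mem_singleton_iff, rightWalk_succ, prefixSet,
        seqShift, mem_ofPred_eq, Nat.lt_one_iff, forall_eq, add_zero]
      constructor
      · rintro ⟨rfl, rfl⟩
        simp
      · rintro ⟨rfl, h⟩
        simp [h]
    rw [hstep, measure_inter_preimage_seqShift_of_dependsOn hiid (dependsOn_preimage_rightWalk m _)
      (measurableSet_prefixSet _ _), ih, measure_prefixSet hiid]
    simp

/-- Conditionally on an event `B` of the first `k` steps on which `Z k = b`, the walk after time
`k + m` is `b g` times an independent copy of the walk, where `g ∼ ν^{*m}`. -/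
theorem measure_preimage_rightWalkFrom_inter (hiid : IsIIDMeasure ν P) {k m : ℕ}
    {B : Set (ℕ → G)} (hB : DependsOn (· ∈ B) (Iio k)) {b : G}
    (hb : ∀ ω ∈ B, rightWalk k ω = b) {S : Set (ℕ → G)} (hS : MeasurableSet S) :
    P (rightWalkFrom (k + m) ⁻¹' S ∩ B) =
      P B * ∑' g, convPow ν m g * P (translatedWalk (b * g) ⁻¹' S) := by
  rw [measure_eq_tsum_inter_preimage_singleton P
    ((measurable_rightWalk m).comp (measurable_seqShift k)), ← ENNReal.tsum_mul_left]
  refine tsum_congr fun g => ?_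
  set E := B ∩ seqShift k ⁻¹' (rightWalk m ⁻¹' {g})
  have hE : DependsOn (· ∈ E) (Iio (k + m)) := fun ω ω' h =>
    congrArg₂ And (hB.mono (Iio_subset_Iio (Nat.le_add_right k m)) h)
      (dependsOn_preimage_rightWalk m {g} fun i hi => h (k + i) (by simp_all))
  have hfiber : rightWalkFrom (k + m) ⁻¹' S ∩ B ∩ (rightWalk m ∘ seqShift k) ⁻¹' {g} =
      E ∩ seqShift (k + m) ⁻¹' (translatedWalk (b * g) ⁻¹' S) := by
    ext ω
    simp only [E, mem_inter_iff, mem_preimage, mem_singleton_iff, Function.comp_apply]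
    constructor
    · rintro ⟨⟨hωS, hωB⟩, rfl⟩
      rw [rightWalkFrom_add, hb ω hωB] at hωS
      exact ⟨⟨hωB, rfl⟩, hωS⟩
    · rintro ⟨⟨hωB, hg⟩, hωS⟩
      rw [← hb ω hωB, ← hg, ← rightWalkFrom_add] at hωS
      exact ⟨⟨hωS, hωB⟩, hg⟩
  rw [hfiber, measure_inter_preimage_seqShift_of_dependsOn hiid hE (measurable_translatedWalk _ hS),
    measure_inter_preimage_seqShift_of_dependsOn hiid hB
      (measurable_rightWalk m (measurableSet_singleton g)),
    measure_preimage_rightWalk hiid, mul_assoc]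

end RandomWalk
section TailTriviality

variable {G : Type*} [Group G] [Countable G] [MeasurableSpace G] [DiscreteMeasurableSpace G]
  {ν : PMF G} {P : Measure (ℕ → G)} [IsProbabilityMeasure P]

theorem measure_preimage_rightWalkFrom (hiid : IsIIDMeasure ν P) (k m : ℕ) {S : Set (ℕ → G)}
    (hS : MeasurableSet S) :
    P (rightWalkFrom (k + m) ⁻¹' S) =
      ∑' a, convPow ν k a * ∑' g, convPow ν m g * P (translatedWalk (a * g) ⁻¹' S) := by
  rw [measure_eq_tsum_inter_preimage_singleton P (measurable_rightWalk k)]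
  refine tsum_congr fun a => ?_
  rw [measure_preimage_rightWalkFrom_inter hiid (dependsOn_preimage_rightWalk k {a})
    (fun _ hω => hω) hS, measure_preimage_rightWalk hiid]

theorem measure_tail_inter_prefixSet (hiid : IsIIDMeasure ν P)
    (hTV : ∀ g : G, Tendsto
      (fun n => ∑' x : G, |((convPow ν n) (g⁻¹ * x)).toReal - ((convPow ν n) x).toReal|)
      atTop (𝓝 0))
    {A : Set (ℕ → G)} (hA : MeasurableSet[tailAlg rightWalk] A) (k : ℕ) (f : ℕ → G) :
    P (A ∩ prefixSet k f) = P A * P (prefixSet k f) := by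
  choose S hS hAS using fun m => exists_eq_preimage_rightWalkFrom_of_tail hA (k + m)
  set Φ : ℕ → G → ℝ≥0∞ := fun m c => ∑' g, convPow ν m g * P (translatedWalk (c * g) ⁻¹' S m)
  have hΦ (m : ℕ) (c : G) : Φ m c ≤ 1 := PMF.tsum_mul_le_one _ fun _ => prob_le_one
  have hlim (c : G) : Tendsto (fun m => (Φ m c).toReal - (Φ m 1).toReal) atTop (𝓝 0) :=
    squeeze_zero_norm (fun m => by
      simp only [Φ, one_mul, Real.norm_eq_abs]
      exact abs_toReal_tsum_mul_translate_sub_le (convPow ν m)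
        (H := fun c' => P (translatedWalk c' ⁻¹' S m)) (fun _ => prob_le_one) c) (hTV c)
  rw [mul_comm]
  refine (convPow ν k).eq_mul_tsum_of_tendsto_translate_sub hΦ hlim (measure_ne_top _ _)
    (rightWalk k f) (fun m => ?_) (fun m => ?_)
  · rw [hAS m, measure_preimage_rightWalkFrom_inter hiid (dependsOn_prefixSet k f)
      (fun ω hω => dependsOn_rightWalk k fun i hi => hω i hi) (hS m)]
  · rw [hAS m, measure_preimage_rightWalkFrom hiid k m (hS m)]

end TailTriviality

theorem stmt_9_general {G : Type*} [Group G] [Countable G]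
    [MeasurableSpace G] [DiscreteMeasurableSpace G]
    (ν : PMF G)
    (hTV : ∀ g : G, Tendsto
      (fun n => ∑' x : G, |((convPow ν n) (g⁻¹ * x)).toReal - ((convPow ν n) x).toReal|)
      atTop (nhds 0)) :
    ∀ P : Measure (ℕ → G), IsProbabilityMeasure P → IsIIDMeasure ν P →
      TailTrivial rightWalk P := by
  intro P _ hiid A hA
  obtain ⟨S, hS, rfl⟩ := exists_eq_preimage_rightWalkFrom_of_tail hA 0
  refine measure_eq_zero_or_one_of_forall_measure_inter_eq isPiSystem_prefixSets
    generateFrom_prefixSets (measurable_rightWalkFrom 0 hS) ?_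
  rintro _ ⟨k, f, rfl⟩
  exact measure_tail_inter_prefixSet hiid hTV hA k f

/-- Kaimanovich–Vershik: if a non-degenerate measure `ν` on a countable group `G`
satisfies `‖g·ν^{*n} − ν^{*n}‖ → 0` (total variation) for every `g ∈ G`, then the
Poisson (tail) boundary of the right `ν`-random walk is trivial. -/
theorem stmt_9 {G : Type*} [Group G] [Countable G]
    [MeasurableSpace G] [DiscreteMeasurableSpace G]
    (ν : PMF G) (hnd : NonDegenerate ν)
    (hTV : ∀ g : G, Tendsto
      (fun n => ∑' x : G, |((convPow ν n) (g⁻¹ * x)).toReal - ((convPow ν n) x).toReal|)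
      atTop (nhds 0)) :
    ∀ P : Measure (ℕ → G), IsProbabilityMeasure P → IsIIDMeasure ν P →
      TailTrivial rightWalk P :=
  stmt_9_general ν hTV
end

section
/- Let G be a finitely generated group. If G is virtually nilpotent, then every factor group of G with the ICC property is trivial. -/
/-- A subset-of-conjugates set is finite when the centralizer has finite index. -/
lemma aux_conj_finite {Q : Type*} [Group Q] (g : Q)
    (hfi : (Subgroup.centralizer {g}).FiniteIndex) :
    {h : Q | ∃ x : Q, x * g * x⁻¹ = h}.Finite := by
  set H := Subgroup.centralizer ({g} : Set Q)
  haveI : H.FiniteIndex := hfi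
  haveI : Finite (Q ⧸ H) := Subgroup.finite_quotient_of_finiteIndex
  have key : ∀ x y : Q, (QuotientGroup.mk x : Q ⧸ H) = QuotientGroup.mk y →
      x * g * x⁻¹ = y * g * y⁻¹ := by
    intro x y hxy
    have h1 : x⁻¹ * y ∈ H := (QuotientGroup.leftRel_apply).mp (Quotient.exact' hxy)
    have h2 : (x⁻¹ * y) * g = g * (x⁻¹ * y) :=
      Subgroup.mem_centralizer_singleton_iff.mp h1
    have : y * g = x * g * (x⁻¹ * y) := by
      calc y * g = x * ((x⁻¹ * y) * g) := by group
        _ = x * (g * (x⁻¹ * y)) := by rw [h2]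
        _ = x * g * (x⁻¹ * y) := by group
    calc x * g * x⁻¹ = (x * g * (x⁻¹ * y)) * y⁻¹ := by group
      _ = (y * g) * y⁻¹ := by rw [← this]
  let f : Q ⧸ H → Q := fun q => Quotient.liftOn' q (fun x => x * g * x⁻¹)
    (fun x y hxy => key x y (Quotient.sound' hxy))
  have hsub : {h : Q | ∃ x : Q, x * g * x⁻¹ = h} ⊆ Set.range f := by
    rintro h ⟨x, rfl⟩
    exact ⟨QuotientGroup.mk x, rfl⟩
  exact Set.Finite.subset (Set.finite_range f) hsub

/-- A nilpotent group with trivial center is trivial. -/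
lemma aux_nilpotent_center_trivial {Q : Type*} [Group Q] [Group.IsNilpotent Q]
    (h : ∀ x : Q, x ∈ Subgroup.center Q → x = 1) : ∀ x : Q, x = 1 := by
  have hcen : Subgroup.center Q = ⊥ := by
    rw [Subgroup.eq_bot_iff_forall]; exact h
  have hbot : ∀ n : ℕ, Subgroup.upperCentralSeries Q n = ⊥ := by
    intro n
    induction n with
    | zero => exact Subgroup.upperCentralSeries_zero Q
    | succ n ih =>
      ext x
      rw [Subgroup.mem_upperCentralSeries_succ_iff]
      simp only [ih, Subgroup.mem_bot]
      constructor
      · intro hx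
        apply h
        rw [Subgroup.mem_center_iff]
        intro y
        have := hx y
        have : x * y * x⁻¹ = y := by
          have h1 : x * y * x⁻¹ * y⁻¹ * y = 1 * y := by rw [← commutatorElement_def, this]
          simpa using h1
        calc y * x = (x * y * x⁻¹) * x := by rw [this]
          _ = x * y := by group
      · rintro rfl; intro y; group
  obtain ⟨n, hn⟩ := Group.IsNilpotent.nilpotent (G := Q)
  intro x
  have : x ∈ Subgroup.upperCentralSeries Q n := hn ▸ Subgroup.mem_top x
  rwa [hbot n, Subgroup.mem_bot] at this

/-- If a finitely generated group `G` is virtually nilpotent (it has a nilpotent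
subgroup of finite index), then every factor group of `G` with the ICC property
(every non-identity element has an infinite conjugacy class) is trivial. -/
theorem stmt_19 {G : Type*} [Group G] [Group.FG G]
    (hvn : ∃ H : Subgroup G, Group.IsNilpotent H ∧ H.FiniteIndex)
    (N : Subgroup G) [N.Normal]
    (hICC : ∀ g : G ⧸ N, g ≠ 1 → {h : G ⧸ N | ∃ x : G ⧸ N, x * g * x⁻¹ = h}.Infinite) :
    ∀ g : G ⧸ N, g = 1 := by
  obtain ⟨H, hnil, hfi⟩ := hvn
  set φ := QuotientGroup.mk' N
  set K : Subgroup (G ⧸ N) := H.map φ with hK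
  -- K is nilpotent
  haveI : Group.IsNilpotent H := hnil
  haveI hKnil : Group.IsNilpotent K :=
    nilpotent_of_surjective (φ.subgroupMap H) (φ.subgroupMap_surjective H)
  -- K has finite index
  have hKfi : K.FiniteIndex := by
    constructor
    have hdvd : K.index ∣ H.index :=
      Subgroup.index_map_dvd H (QuotientGroup.mk'_surjective N)
    intro h0
    rw [h0] at hdvd
    exact hfi.index_ne_zero (zero_dvd_iff.mp hdvd)
  -- any element commuting with all of K is trivial
  have hcomm : ∀ z : G ⧸ N, (∀ k ∈ K, k * z = z * k) → z = 1 := by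
    intro z hz
    by_contra hne
    have hle : K ≤ Subgroup.centralizer {z} := by
      intro k hk
      exact Subgroup.mem_centralizer_singleton_iff.mpr (hz k hk)
    have hcfi : (Subgroup.centralizer ({z} : Set (G ⧸ N))).FiniteIndex :=
      ⟨fun h0 => hKfi.index_ne_zero
        (Nat.eq_zero_of_zero_dvd (h0 ▸ Subgroup.index_dvd_of_le hle))⟩
    exact (hICC z hne) (aux_conj_finite z hcfi)
  -- center of K is trivial, hence K is trivial
  have hKtriv : ∀ k : K, k = 1 := by
    apply aux_nilpotent_center_trivial
    intro x hx
    have hc : ∀ k ∈ K, k * (x : G ⧸ N) = (x : G ⧸ N) * k := by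
      intro k hk
      have := (Subgroup.mem_center_iff.mp hx) ⟨k, hk⟩
      simpa using congrArg Subtype.val this
    have : (x : G ⧸ N) = 1 := hcomm x hc
    exact Subtype.ext this
  have hKbot : K = ⊥ := by
    rw [Subgroup.eq_bot_iff_forall]
    intro x hx
    exact congrArg Subtype.val (hKtriv ⟨x, hx⟩)
  -- so G ⧸ N is finite
  have hfin : Finite (G ⧸ N) := by
    rw [hKbot] at hKfi
    have := hKfi.index_ne_zero
    rw [Subgroup.index_bot] at this
    exact Nat.finite_of_card_ne_zero this
  -- finite ICC group is trivial
  intro g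
  by_contra hne
  exact (hICC g hne) (Set.toFinite _)
end
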